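/- arXiv:1209.0283 — 8 statements merged into one kernel-verified Lean document; each statement's English description precedes it below -/
import Mathlib

section
/- Let p be an odd prime and let d be the multiplicative order of 2 modulo p. If ζ is a primitive p-th root of unity in an algebraic closure of F_2, then ζ and ζ^{-1} are roots of the same irreducible factor of the p-th cyclotomic polynomial over F_2 if and only if d is even. -/
/-!
Over a finite field `K` with `q` elements, the conjugates of an algebraic element `x` are exactly
its Frobenius images `x ^ q ^ n`: inside the finite field `K⟮x, y⟯` every `K`-automorphism is a
power of Frobenius. Hence `ζ⁻¹` is conjugate to `ζ` over `𝔽₂` iff `2 ^ n ≡ -1 (mod p)` for some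
`n`, and since `-1` is the unique element of order two in `(ZMod p)ˣ`, this happens iff the order
of `2` is even.
-/

namespace FiniteField

variable {K L : Type*} [Field K] [Fintype K] [Field L] [Algebra K L]

theorem isConjRoot_pow_card_pow {x : L} (hx : IsIntegral K x) (n : ℕ) :
    IsConjRoot K x (x ^ Fintype.card K ^ n) := by
  refine isConjRoot_of_aeval_eq_zero hx ?_
  have := Polynomial.aeval_algHom_apply (frobeniusAlgHom K L ^ n) x (minpoly K x)
  simpa only [minpoly.aeval, map_zero, AlgHom.coe_pow, coe_frobeniusAlgHom, pow_iterate] using this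

theorem exists_pow_card_pow_eq_of_isConjRoot_of_finite [Finite L] {x y : L}
    (h : IsConjRoot K x y) : ∃ n : ℕ, x ^ Fintype.card K ^ n = y := by
  obtain ⟨σ, hσ⟩ := h.symm.exists_algEquiv
  obtain ⟨n, rfl⟩ := (bijective_frobeniusAlgEquivOfAlgebraic_pow K L).2 σ
  refine ⟨n, ?_⟩
  rw [← hσ, AlgEquiv.coe_pow, coe_frobeniusAlgEquivOfAlgebraic_iterate]

theorem exists_pow_card_pow_eq_of_isConjRoot {x y : L} (hx : IsIntegral K x)
    (h : IsConjRoot K x y) : ∃ n : ℕ, x ^ Fintype.card K ^ n = y := by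
  let E := IntermediateField.adjoin K {x, y}
  have : FiniteDimensional K E := IntermediateField.finiteDimensional_adjoin <| by
    rintro z (rfl | rfl)
    exacts [hx, h.isIntegral hx]
  have : Finite E := Module.finite_of_finite K
  let x' : E := ⟨x, IntermediateField.subset_adjoin K _ (by simp)⟩
  let y' : E := ⟨y, IntermediateField.subset_adjoin K _ (by simp)⟩
  have h' : IsConjRoot K x' y' := (isConjRoot_algHom_iff E.val).mp h
  obtain ⟨n, hn⟩ := exists_pow_card_pow_eq_of_isConjRoot_of_finite h'
  exact ⟨n, congrArg Subtype.val hn⟩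

theorem isConjRoot_iff_exists_pow_card_pow_eq {x y : L} (hx : IsIntegral K x) :
    IsConjRoot K x y ↔ ∃ n : ℕ, x ^ Fintype.card K ^ n = y :=
  ⟨exists_pow_card_pow_eq_of_isConjRoot hx, fun ⟨n, hn⟩ => hn ▸ isConjRoot_pow_card_pow hx n⟩

end FiniteField

theorem IsPrimitiveRoot.pow_eq_inv_iff {M : Type*} [CommGroupWithZero M] {ζ : M} {k : ℕ}
    (h : IsPrimitiveRoot ζ k) (hk : k ≠ 0) (m : ℕ) : ζ ^ m = ζ⁻¹ ↔ (m : ZMod k) = -1 := by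
  rw [← mul_eq_one_iff_eq_inv₀ (h.ne_zero hk), ← pow_succ, h.pow_eq_one_iff_dvd,
    ← ZMod.natCast_eq_zero_iff, Nat.cast_succ, add_eq_zero_iff_eq_neg]

theorem exists_pow_eq_neg_one_iff_even_orderOf {R : Type*} [CommRing R] [IsDomain R]
    (hR : ringChar R ≠ 2) {a : R} (ha : IsOfFinOrder a) :
    (∃ n : ℕ, a ^ n = -1) ↔ Even (orderOf a) := by
  constructor
  · rintro ⟨n, hn⟩
    have : orderOf (-1 : R) = 2 := by rw [orderOf_neg_one, if_neg hR]
    rw [even_iff_two_dvd, ← this, ← hn]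
    exact orderOf_pow_dvd n
  · rintro ⟨m, hm⟩
    have hsq : a ^ m * a ^ m = 1 := by rw [← pow_add, ← hm, pow_orderOf_eq_one]
    have hpos := ha.orderOf_pos
    have hne : a ^ m ≠ 1 := fun h1 =>
      (Nat.le_of_dvd (by omega) (orderOf_dvd_of_pow_eq_one h1)).not_gt (by omega)
    exact ⟨m, (mul_self_eq_one_iff.mp hsq).resolve_left hne⟩

theorem stmt0 (p : ℕ) (hp : p.Prime) (hodd : Odd p)
    (ζ : AlgebraicClosure (ZMod 2)) (hζ : IsPrimitiveRoot ζ p) :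
    minpoly (ZMod 2) ζ = minpoly (ZMod 2) ζ⁻¹ ↔ Even (orderOf (2 : ZMod p)) := by
  have := Fact.mk hp
  have hp2 : p ≠ 2 := by rintro rfl; exact absurd hodd (by decide)
  have h2 : IsUnit (2 : ZMod p) := by
    exact_mod_cast (ZMod.isUnit_iff_coprime 2 p).mpr (Nat.coprime_two_left.mpr hodd)
  calc minpoly (ZMod 2) ζ = minpoly (ZMod 2) ζ⁻¹ ↔ ∃ n : ℕ, ζ ^ 2 ^ n = ζ⁻¹ := by
        rw [← isConjRoot_def, FiniteField.isConjRoot_iff_exists_pow_card_pow_eq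
          (Algebra.IsIntegral.isIntegral ζ), ZMod.card]
    _ ↔ ∃ n : ℕ, (2 : ZMod p) ^ n = -1 := by
        simp only [hζ.pow_eq_inv_iff hp.ne_zero, Nat.cast_pow, Nat.cast_ofNat]
    _ ↔ Even (orderOf (2 : ZMod p)) :=
        exists_pow_eq_neg_one_iff_even_orderOf (by rwa [ZMod.ringChar_zmod_n]) h2.isOfFinOrder
end

section
/- Let p be an odd prime with multiplicative order of 2 mod p equal to d, and ζ a primitive p-th root of unity over F_2. If d is even then [F_2(ζ + ζ^{-1}) : F_2] = d/2, and if d is odd then [F_2(ζ + ζ^{-1}) : F_2] = d and F_2(ζ + ζ^{-1}) = F_2(ζ). -/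
open IntermediateField Polynomial

/-- If `x ^ (2 ^ m) = x` where `m = finrank (ZMod 2) (ZMod 2)⟮x⟯`. -/
private lemma aux_pow_finrank (x : AlgebraicClosure (ZMod 2)) :
    x ^ 2 ^ Module.finrank (ZMod 2) ((ZMod 2)⟮x⟯) = x := by
  have hint : IsIntegral (ZMod 2) x := Algebra.IsIntegral.isIntegral x
  haveI : FiniteDimensional (ZMod 2) ((ZMod 2)⟮x⟯) := adjoin.finiteDimensional hint
  haveI : Finite ((ZMod 2)⟮x⟯) := Module.finite_of_finite (ZMod 2)
  haveI : Fintype ((ZMod 2)⟮x⟯) := Fintype.ofFinite _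
  have hcard : Fintype.card ((ZMod 2)⟮x⟯)
      = 2 ^ Module.finrank (ZMod 2) ((ZMod 2)⟮x⟯) := by
    have := Module.card_eq_pow_finrank (K := ZMod 2) (V := ((ZMod 2)⟮x⟯))
    rwa [ZMod.card] at this
  have h := FiniteField.pow_card (⟨x, mem_adjoin_simple_self _ x⟩ : ((ZMod 2)⟮x⟯))
  rw [hcard] at h
  have := congrArg (fun y : ((ZMod 2)⟮x⟯) => (y : AlgebraicClosure (ZMod 2))) h
  simpa using this

/-- If `x ^ (2 ^ k) = x` with `k ≥ 1`, then the degree of `x` over `F₂` is at most `k`. -/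
private lemma aux_le (x : AlgebraicClosure (ZMod 2)) (k : ℕ) (hk : k ≠ 0)
    (hx : x ^ 2 ^ k = x) :
    Module.finrank (ZMod 2) ((ZMod 2)⟮x⟯) ≤ k := by
  classical
  have hint : IsIntegral (ZMod 2) x := Algebra.IsIntegral.isIntegral x
  haveI : FiniteDimensional (ZMod 2) ((ZMod 2)⟮x⟯) := adjoin.finiteDimensional hint
  haveI : Finite ((ZMod 2)⟮x⟯) := Module.finite_of_finite (ZMod 2)
  haveI : Fintype ((ZMod 2)⟮x⟯) := Fintype.ofFinite _
  have h12k : 1 < 2 ^ k := Nat.one_lt_two_pow hk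
  -- every element of the adjoin satisfies the same equation
  have hall : ∀ y : AlgebraicClosure (ZMod 2), y ∈ (ZMod 2)⟮x⟯ → y ^ 2 ^ k = y := by
    intro y hy
    induction hy using adjoin_induction with
    | mem z hz =>
      rw [Set.mem_singleton_iff.mp hz]; exact hx
    | algebraMap r =>
      have : r ^ (Fintype.card (ZMod 2)) ^ k = r := FiniteField.pow_card_pow k r
      rw [ZMod.card] at this
      rw [← map_pow, this]
    | add a b _ _ ha hb =>
      rw [add_pow_char_pow, ha, hb]
    | inv a _ ha =>
      rw [inv_pow, ha]
    | mul a b _ _ ha hb =>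
      rw [mul_pow, ha, hb]
  -- the roots of `X ^ 2 ^ k - X` bound the cardinality
  set q : Polynomial (AlgebraicClosure (ZMod 2)) := X ^ 2 ^ k - X with hq
  have hq0 : q ≠ 0 := FiniteField.X_pow_card_sub_X_ne_zero _ h12k
  have hqd : q.natDegree = 2 ^ k := FiniteField.X_pow_card_sub_X_natDegree_eq _ h12k
  have himg : ∀ y : ((ZMod 2)⟮x⟯), (y : AlgebraicClosure (ZMod 2)) ∈ q.roots.toFinset := by
    intro y
    rw [Multiset.mem_toFinset, mem_roots hq0]
    have := hall y y.2
    simp only [IsRoot, hq, eval_sub, eval_pow, eval_X]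
    rw [this, sub_self]
  have hinj : Function.Injective
      (fun y : ((ZMod 2)⟮x⟯) => (⟨(y : AlgebraicClosure (ZMod 2)), himg y⟩ :
        {z // z ∈ q.roots.toFinset})) := by
    intro a b hab
    exact Subtype.ext (by simpa using congrArg Subtype.val hab)
  have hcard1 : Fintype.card ((ZMod 2)⟮x⟯) ≤ q.roots.toFinset.card := by
    have := Fintype.card_le_of_injective _ hinj
    simpa [Fintype.card_coe] using this
  have hcard2 : q.roots.toFinset.card ≤ 2 ^ k := by
    calc q.roots.toFinset.card ≤ Multiset.card q.roots := Multiset.toFinset_card_le _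
    _ ≤ q.natDegree := card_roots' q
    _ = 2 ^ k := hqd
  have hcard : Fintype.card ((ZMod 2)⟮x⟯)
      = 2 ^ Module.finrank (ZMod 2) ((ZMod 2)⟮x⟯) := by
    have := Module.card_eq_pow_finrank (K := ZMod 2) (V := ((ZMod 2)⟮x⟯))
    rwa [ZMod.card] at this
  have : (2:ℕ) ^ Module.finrank (ZMod 2) ((ZMod 2)⟮x⟯) ≤ 2 ^ k := by
    rw [← hcard]; exact le_trans hcard1 hcard2
  exact (Nat.pow_le_pow_iff_right one_lt_two).mp this

theorem stmt2 (p : ℕ) (hp : p.Prime) (hodd : Odd p)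
    (ζ : AlgebraicClosure (ZMod 2)) (hζ : IsPrimitiveRoot ζ p)
    (d : ℕ) (hd : d = orderOf (2 : ZMod p)) :
    (Even d → Module.finrank (ZMod 2) ((ZMod 2)⟮ζ + ζ⁻¹⟯) = d / 2) ∧
    (Odd d → Module.finrank (ZMod 2) ((ZMod 2)⟮ζ + ζ⁻¹⟯) = d ∧
      (ZMod 2)⟮ζ + ζ⁻¹⟯ = (ZMod 2)⟮ζ⟯) := by
  haveI : Fact p.Prime := ⟨hp⟩
  have hp2 : p ≠ 2 := by
    rintro rfl
    exact (Nat.not_odd_iff_even.mpr even_two) hodd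
  have hp3 : 3 ≤ p := by
    have h2p := hp.two_le
    rcases hodd with ⟨r, hr⟩
    omega
  have hp0 : p ≠ 0 := hp.ne_zero
  have hζ0 : ζ ≠ 0 := hζ.ne_zero hp0
  have h2ne : (2 : ZMod p) ≠ 0 := by
    intro h
    have : ((2:ℕ) : ZMod p) = 0 := by push_cast; exact h
    have hdvd : p ∣ 2 := (ZMod.natCast_eq_zero_iff 2 p).mp this
    exact hp2 ((Nat.prime_dvd_prime_iff_eq hp Nat.prime_two).mp hdvd)
  have hd0 : 0 < d := by
    rw [hd]
    exact orderOf_pos_iff.mpr (isOfFinOrder_iff_pow_eq_one.mpr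
      ⟨p - 1, by omega, ZMod.pow_card_sub_one_eq_one h2ne⟩)
  -- key characterization: ζ ^ (2 ^ k) = ζ ↔ d ∣ k
  have hzk : ∀ k : ℕ, ζ ^ 2 ^ k = ζ ↔ d ∣ k := by
    intro k
    have h1le : (1:ℕ) ≤ 2 ^ k := Nat.one_le_two_pow
    have step1 : ζ ^ 2 ^ k = ζ ↔ ζ ^ (2 ^ k - 1) = 1 := by
      constructor
      · intro h
        have h' : ζ ^ (2 ^ k - 1) * ζ = 1 * ζ := by
          rw [one_mul, ← pow_succ]
          rw [show 2 ^ k - 1 + 1 = 2 ^ k by omega]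
          exact h
        exact mul_right_cancel₀ hζ0 h'
      · intro h
        calc ζ ^ 2 ^ k = ζ ^ (2 ^ k - 1 + 1) := by rw [show 2 ^ k - 1 + 1 = 2 ^ k by omega]
        _ = ζ ^ (2 ^ k - 1) * ζ := pow_succ _ _
        _ = ζ := by rw [h, one_mul]
    have step2 : ζ ^ (2 ^ k - 1) = 1 ↔ p ∣ 2 ^ k - 1 := hζ.pow_eq_one_iff_dvd _
    have step3 : p ∣ 2 ^ k - 1 ↔ (2:ℕ) ^ k ≡ 1 [MOD p] :=
      ⟨fun h => ((Nat.modEq_iff_dvd' h1le).mpr h).symm,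
       fun h => (Nat.modEq_iff_dvd' h1le).mp h.symm⟩
    have step4 : (2:ℕ) ^ k ≡ 1 [MOD p] ↔ (2 : ZMod p) ^ k = 1 := by
      rw [← ZMod.natCast_eq_natCast_iff]
      push_cast
      rfl
    have step5 : (2 : ZMod p) ^ k = 1 ↔ d ∣ k := by
      rw [hd]
      exact (orderOf_dvd_iff_pow_eq_one).symm
    rw [step1, step2, step3, step4, step5]
  set η : AlgebraicClosure (ZMod 2) := ζ + ζ⁻¹ with hη
  have hint : IsIntegral (ZMod 2) η := Algebra.IsIntegral.isIntegral η
  haveI : FiniteDimensional (ZMod 2) ((ZMod 2)⟮η⟯) := adjoin.finiteDimensional hint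
  set f := Module.finrank (ZMod 2) ((ZMod 2)⟮η⟯) with hf
  have hfpos : 0 < f := Module.finrank_pos
  -- η is fixed by 2^f-power Frobenius
  have hη2f : η ^ 2 ^ f = η := aux_pow_finrank η
  -- ζ^(2^f) is either ζ or ζ⁻¹
  have hz1 : ζ * ζ⁻¹ = 1 := mul_inv_cancel₀ hζ0
  have key : ζ ^ 2 ^ f = ζ ∨ ζ ^ 2 ^ f = ζ⁻¹ := by
    set y : AlgebraicClosure (ZMod 2) := ζ ^ 2 ^ f with hy
    have e0 : ζ ^ 2 + η * ζ + 1 = 0 := by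
      have : ζ ^ 2 + η * ζ + 1 = ζ ^ 2 + ζ ^ 2 + (ζ * ζ⁻¹) + 1 := by
        rw [hη]; ring
      rw [this, hz1, CharTwo.add_self_eq_zero, zero_add, CharTwo.add_self_eq_zero]
    have e1 : y ^ 2 + η * y + 1 = 0 := by
      have : y ^ 2 + η * y + 1 = (ζ ^ 2 + η * ζ + 1) ^ 2 ^ f := by
        rw [add_pow_char_pow (R := AlgebraicClosure (ZMod 2)) (p := 2)]
        rw [add_pow_char_pow (R := AlgebraicClosure (ZMod 2)) (p := 2)]
        rw [mul_pow, hη2f, one_pow, hy, ← pow_mul, ← pow_mul, mul_comm (2^f) 2]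
      rw [this, e0, zero_pow (by positivity)]
    have e2 : (y + ζ) * (y + ζ⁻¹) = 0 := by
      have : (y + ζ) * (y + ζ⁻¹) = y ^ 2 + (ζ + ζ⁻¹) * y + ζ * ζ⁻¹ := by ring
      rw [this, hz1, ← hη]
      exact e1
    rcases mul_eq_zero.mp e2 with h | h
    · left
      have := eq_neg_of_add_eq_zero_left h
      rwa [CharTwo.neg_eq] at this
    · right
      have := eq_neg_of_add_eq_zero_left h
      rwa [CharTwo.neg_eq] at this
  -- in either case ζ^(2^(2f)) = ζ, so d ∣ 2f
  have hd2f : d ∣ 2 * f := by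
    rw [← hzk]
    have h2f : (2:ℕ) ^ (2 * f) = 2 ^ f * 2 ^ f := by rw [two_mul, pow_add]
    rw [h2f, pow_mul]
    rcases key with h | h
    · rw [h, h]
    · rw [h, inv_pow, h, inv_inv]
  constructor
  · -- even case
    intro heven
    have hhalf : d / 2 ≠ 0 := by
      rcases heven with ⟨r, hr⟩
      omega
    -- 2^(d/2) = -1 in ZMod p
    have hu : (2 : ZMod p) ^ (d / 2) = -1 := by
      set u : ZMod p := (2 : ZMod p) ^ (d / 2) with hu'
      have hu2 : u ^ 2 = 1 := by
        rw [hu', ← pow_mul]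
        have : d / 2 * 2 = d := by rcases heven with ⟨r, hr⟩; omega
        rw [this, hd, pow_orderOf_eq_one]
      have hune : u ≠ 1 := by
        intro h
        have hpow : (2 : ZMod p) ^ (d / 2) = 1 := by rw [← hu']; exact h
        have : d ∣ d / 2 := by
          have h2 := orderOf_dvd_of_pow_eq_one hpow
          rwa [← hd] at h2
        have := Nat.le_of_dvd (by omega) this
        omega
      have : (u - 1) * (u + 1) = 0 := by
        have : (u - 1) * (u + 1) = u ^ 2 - 1 := by ring
        rw [this, hu2, sub_self]
      rcases mul_eq_zero.mp this with h | h
      · exact absurd (by linear_combination h) hune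
      · linear_combination h
    -- hence ζ^(2^(d/2)) = ζ⁻¹
    have hmod : (2:ℕ) ^ (d / 2) ≡ p - 1 [MOD p] := by
      rw [← ZMod.natCast_eq_natCast_iff]
      have h1 : ((p - 1 : ℕ) : ZMod p) = -1 := by
        have : ((p : ℕ) : ZMod p) = 0 := ZMod.natCast_self p
        push_cast [Nat.cast_sub (by omega : 1 ≤ p)]
        rw [this]; ring
      rw [h1]
      push_cast
      exact hu
    have hzhalf : ζ ^ 2 ^ (d / 2) = ζ⁻¹ := by
      have hpowmod : ∀ n : ℕ, ζ ^ n = ζ ^ (n % p) := by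
        intro n
        conv_lhs => rw [← Nat.div_add_mod n p]
        rw [pow_add, pow_mul, hζ.pow_eq_one, one_pow, one_mul]
      have : ζ ^ 2 ^ (d / 2) = ζ ^ (p - 1) := by
        rw [hpowmod (2 ^ (d / 2)),
          show (2:ℕ) ^ (d / 2) % p = (p - 1) % p from hmod, ← hpowmod]
      rw [this]
      refine eq_inv_of_mul_eq_one_left ?_
      calc ζ ^ (p - 1) * ζ = ζ ^ (p - 1) * ζ ^ 1 := by rw [pow_one]
      _ = ζ ^ (p - 1 + 1) := (pow_add ζ (p - 1) 1).symm
      _ = ζ ^ p := by rw [show p - 1 + 1 = p by omega]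
      _ = 1 := hζ.pow_eq_one
    have hηhalf : η ^ 2 ^ (d / 2) = η := by
      rw [hη, add_pow_char_pow (R := AlgebraicClosure (ZMod 2)) (p := 2),
        hzhalf, inv_pow, hzhalf, inv_inv, add_comm]
    have hfle : f ≤ d / 2 := aux_le η (d / 2) hhalf hηhalf
    have h2fled : 2 * f ≤ d := by rcases heven with ⟨r, hr⟩; omega
    have hdle : d ≤ 2 * f := Nat.le_of_dvd (by omega) hd2f
    omega
  · -- odd case
    intro hoddd
    have hηd : η ^ 2 ^ d = η := by
      have hzd : ζ ^ 2 ^ d = ζ := (hzk d).mpr dvd_rfl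
      rw [hη, add_pow_char_pow (R := AlgebraicClosure (ZMod 2)) (p := 2),
        hzd, inv_pow, hzd]
    have hfled : f ≤ d := aux_le η d (by omega) hηd
    have hddvdf : d ∣ f := (hoddd.coprime_two_right).dvd_of_dvd_mul_left hd2f
    have hdlef : d ≤ f := Nat.le_of_dvd hfpos hddvdf
    have hfd : f = d := le_antisymm hfled hdlef
    refine ⟨hfd, ?_⟩
    -- the field equality
    have hintζ : IsIntegral (ZMod 2) ζ := Algebra.IsIntegral.isIntegral ζ
    haveI : FiniteDimensional (ZMod 2) ((ZMod 2)⟮ζ⟯) := adjoin.finiteDimensional hintζ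
    have hle : (ZMod 2)⟮η⟯ ≤ (ZMod 2)⟮ζ⟯ := by
      rw [adjoin_simple_le_iff]
      exact add_mem (mem_adjoin_simple_self _ ζ) (inv_mem (mem_adjoin_simple_self _ ζ))
    have hmζ : Module.finrank (ZMod 2) ((ZMod 2)⟮ζ⟯) = d := by
      have h1 : d ∣ Module.finrank (ZMod 2) ((ZMod 2)⟮ζ⟯) :=
        (hzk _).mp (aux_pow_finrank ζ)
      have h2 : Module.finrank (ZMod 2) ((ZMod 2)⟮ζ⟯) ≤ d :=
        aux_le ζ d (by omega) ((hzk d).mpr dvd_rfl)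
      have h3 : d ≤ Module.finrank (ZMod 2) ((ZMod 2)⟮ζ⟯) :=
        Nat.le_of_dvd Module.finrank_pos h1
      omega
    exact eq_of_le_of_finrank_le hle (by rw [hmζ, ← hfd])
end

section
/- Every nontrivial bicyclic unit u_{g,h} = 1 + (g−1)hĝ in the group algebra F_2 D_{2p} is a unitary unit with respect to the canonical involution, i.e., (u_{g,h})* = u_{g,h}^{-1}. -/
/-!
Write `x = (g - 1) h ĝ`, so that `u = 1 + x`. Since `ĝ (g - 1) = 0` we get `x² = 0`, hence
`u² = 1` in characteristic 2. If `g` is a rotation then `h` normalizes `⟨g⟩`, and `g ĝ = ĝ`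
forces `x = 0`, i.e. `u = 1`. If `g = s` is a reflection then `ĝ = 1 + s =: y` and, in
characteristic 2, `x = y h y`. As `y* = y`, we get `x* = y h⁻¹ y`, and this is `y h y` because
either `h⁻¹ = h` or `h⁻¹ = s h s`, while `y s = y = s y`. So `u* = u = u⁻¹`.
-/

open MonoidAlgebra

/-- The canonical involution of the group algebra `F₂ D₂ₚ`, the linear
extension of `g ↦ g⁻¹`. -/
noncomputable def canonicalInvolution (p : ℕ)
    (x : MonoidAlgebra (ZMod 2) (DihedralGroup p)) :
    MonoidAlgebra (ZMod 2) (DihedralGroup p) :=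
  MonoidAlgebra.mapDomain (fun g => g⁻¹) x

open Finset

namespace MonoidAlgebra

section Involution

variable {k G : Type*} [CommSemiring k] [Group G]

theorem mapDomain_inv_mul (x y : MonoidAlgebra k G) :
    mapDomain (·⁻¹) (x * y) = mapDomain (·⁻¹) y * mapDomain (·⁻¹) x := by
  induction x using induction_linear with
  | zero => simp [mapDomain_zero]
  | add x x' hx hx' => rw [add_mul, mapDomain_add, mapDomain_add, hx, hx', mul_add]
  | single a r =>
    induction y using induction_linear with
    | zero => simp [mapDomain_zero]
    | add y y' hy hy' => rw [mul_add, mapDomain_add, mapDomain_add, hy, hy', add_mul]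
    | single b s => simp only [single_mul_single, mapDomain_single, mul_inv_rev, mul_comm r s]

theorem mapDomain_inv_of (g : G) : mapDomain (·⁻¹) (of k G g) = of k G g⁻¹ :=
  mapDomain_single

theorem mapDomain_inv_one : mapDomain (·⁻¹) (1 : MonoidAlgebra k G) = 1 := by
  rw [← map_one (of k G), mapDomain_inv_of, inv_one]

end Involution

variable {k G : Type*} [CommRing k] [Group G]

instance instCharP (p : ℕ) [CharP k p] : CharP (MonoidAlgebra k G) p :=
  charP_of_injective_algebraMap' k p

variable (k) in
noncomputable def cyclicSum (g : G) : MonoidAlgebra k G :=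
  ∑ i ∈ range (orderOf g), of k G (g ^ i)

variable (k) in
noncomputable def bicyclicUnit (g h : G) : MonoidAlgebra k G :=
  1 + (of k G g - 1) * of k G h * cyclicSum k g

theorem cyclicSum_eq_geom_sum (g : G) :
    cyclicSum k g = ∑ i ∈ range (orderOf g), of k G g ^ i := by
  simp only [cyclicSum, map_pow]

theorem of_sub_one_mul_cyclicSum (g : G) : (of k G g - 1) * cyclicSum k g = 0 := by
  rw [cyclicSum_eq_geom_sum, mul_geom_sum, ← map_pow, pow_orderOf_eq_one, map_one, sub_self]

theorem cyclicSum_mul_of_sub_one (g : G) : cyclicSum k g * (of k G g - 1) = 0 := by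
  rw [cyclicSum_eq_geom_sum, geom_sum_mul, ← map_pow, pow_orderOf_eq_one, map_one, sub_self]

theorem of_mul_cyclicSum (g : G) : of k G g * cyclicSum k g = cyclicSum k g := by
  rw [← sub_eq_zero, ← sub_one_mul, of_sub_one_mul_cyclicSum]

theorem of_zpow_mul_cyclicSum (g : G) (n : ℤ) :
    of k G (g ^ n) * cyclicSum k g = cyclicSum k g := by
  have hinv : of k G g⁻¹ * cyclicSum k g = cyclicSum k g := by
    conv_lhs => rw [← of_mul_cyclicSum g]
    rw [← mul_assoc, ← map_mul, inv_mul_cancel, map_one, one_mul]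
  induction n using Int.induction_on with
  | zero => rw [zpow_zero, map_one, one_mul]
  | succ n ih => rw [zpow_add_one, map_mul, mul_assoc, of_mul_cyclicSum, ih]
  | pred n ih => rw [zpow_sub_one, map_mul, mul_assoc, hinv, ih]

theorem bicyclicUnit_eq_one_of_conj_mem_zpowers {g h : G}
    (hgh : h⁻¹ * g * h ∈ Subgroup.zpowers g) : bicyclicUnit k g h = 1 := by
  obtain ⟨n, hn⟩ := Subgroup.mem_zpowers_iff.mp hgh
  have hconj : of k G g * of k G h = of k G h * of k G (g ^ n) := by
    rw [← map_mul, ← map_mul, hn, mul_assoc, mul_inv_cancel_left]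
  rw [bicyclicUnit, sub_one_mul, sub_mul, hconj, mul_assoc, of_zpow_mul_cyclicSum, sub_self,
    add_zero]

theorem bicyclicUnit_mul_self [CharP k 2] (g h : G) :
    bicyclicUnit k g h * bicyclicUnit k g h = 1 := by
  set x := (of k G g - 1) * of k G h * cyclicSum k g
  have hx : x * x = 0 := by
    calc x * x = (of k G g - 1) * of k G h * (cyclicSum k g * (of k G g - 1)) * of k G h *
          cyclicSum k g := by simp only [x, mul_assoc]
      _ = 0 := by rw [cyclicSum_mul_of_sub_one, mul_zero, zero_mul, zero_mul]
  have hu : bicyclicUnit k g h = 1 + x := rfl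
  clear_value x
  calc bicyclicUnit k g h * bicyclicUnit k g h = 1 + (x + x) + x * x := by
        rw [hu]; noncomm_ring
    _ = 1 := by rw [hx, CharTwo.add_self_eq_zero, add_zero, add_zero]

theorem cyclicSum_of_orderOf_eq_two {s : G} (hs : orderOf s = 2) :
    cyclicSum k s = 1 + of k G s := by
  rw [cyclicSum, hs, sum_range_succ, sum_range_one, pow_zero, pow_one, map_one]

theorem bicyclicUnit_of_orderOf_eq_two [CharP k 2] {s : G} (hs : orderOf s = 2) (h : G) :
    bicyclicUnit k s h = 1 + (1 + of k G s) * of k G h * (1 + of k G s) := by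
  rw [bicyclicUnit, cyclicSum_of_orderOf_eq_two hs, CharTwo.sub_eq_add, add_comm (of k G s)]

theorem mapDomain_inv_bicyclicUnit_of_orderOf_eq_two [CharP k 2] {s h : G} (hs : orderOf s = 2)
    (hh : h * h = 1 ∨ s * h * s = h⁻¹) :
    mapDomain (·⁻¹) (bicyclicUnit k s h) = bicyclicUnit k s h := by
  have hss : s * s = 1 := by rw [← sq, ← hs, pow_orderOf_eq_one]
  have hsinv : s⁻¹ = s := inv_eq_of_mul_eq_one_right hss
  set y := 1 + of k G s
  have hy : mapDomain (·⁻¹) y = y := by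
    rw [mapDomain_add, mapDomain_inv_one, mapDomain_inv_of, hsinv]
  have hys : y * of k G s = y := by
    rw [add_mul, one_mul, ← map_mul, hss, map_one, add_comm]
  have hsy : of k G s * y = y := by
    rw [mul_add, mul_one, ← map_mul, hss, map_one, add_comm]
  have hconj : y * of k G h⁻¹ * y = y * of k G h * y := by
    rcases hh with hh_sq | hh_conj
    · rw [inv_eq_of_mul_eq_one_right hh_sq]
    · rw [← hh_conj, map_mul, map_mul, mul_assoc y, mul_assoc, mul_assoc, hsy, ← mul_assoc,
        ← mul_assoc, hys]
  rw [bicyclicUnit_of_orderOf_eq_two hs, mapDomain_add, mapDomain_inv_mul, mapDomain_inv_mul,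
    mapDomain_inv_one, mapDomain_inv_of, hy, ← mul_assoc, hconj]

end MonoidAlgebra

namespace DihedralGroup

variable {n : ℕ}

theorem conj_r_mem_zpowers (i : ZMod n) (h : DihedralGroup n) :
    h⁻¹ * r i * h ∈ Subgroup.zpowers (r i) := by
  cases h with
  | r j => simp
  | sr j =>
    rw [show (sr j)⁻¹ * r i * sr j = r i ^ (-1 : ℤ) by simp [sr_mul_r, sr_mul_sr]]
    exact Subgroup.zpow_mem_zpowers _ _

theorem mul_self_eq_one_or_sr_conj_eq_inv (i : ZMod n) (h : DihedralGroup n) :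
    h * h = 1 ∨ sr i * h * sr i = h⁻¹ := by
  cases h with
  | r j => exact Or.inr (by simp [sr_mul_r, sr_mul_sr])
  | sr j => exact Or.inl (sr_mul_self j)

end DihedralGroup

theorem stmt9_general (p : ℕ)
    (g h : DihedralGroup p) :
    let o := MonoidAlgebra.of (ZMod 2) (DihedralGroup p)
    let ghat := ∑ i ∈ Finset.range (orderOf g), o (g ^ i)
    let u := 1 + (o g - 1) * o h * ghat
    u ≠ 1 →
      canonicalInvolution p u * u = 1 ∧ u * canonicalInvolution p u = 1 := by
  intro _ _ _ hu
  change bicyclicUnit (ZMod 2) g h ≠ 1 at hu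
  change mapDomain (·⁻¹) (bicyclicUnit (ZMod 2) g h) * bicyclicUnit (ZMod 2) g h = 1 ∧
    bicyclicUnit (ZMod 2) g h * mapDomain (·⁻¹) (bicyclicUnit (ZMod 2) g h) = 1
  cases g with
  | r i =>
    exact absurd (bicyclicUnit_eq_one_of_conj_mem_zpowers (DihedralGroup.conj_r_mem_zpowers i h)) hu
  | sr i =>
    rw [mapDomain_inv_bicyclicUnit_of_orderOf_eq_two (DihedralGroup.orderOf_sr i)
      (DihedralGroup.mul_self_eq_one_or_sr_conj_eq_inv i h)]
    exact ⟨bicyclicUnit_mul_self _ _, bicyclicUnit_mul_self _ _⟩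

theorem stmt9 (p : ℕ) (hp : p.Prime) (hodd : Odd p)
    (g h : DihedralGroup p) :
    let o := MonoidAlgebra.of (ZMod 2) (DihedralGroup p)
    let ghat := ∑ i ∈ Finset.range (orderOf g), o (g ^ i)
    let u := 1 + (o g - 1) * o h * ghat
    u ≠ 1 →
      canonicalInvolution p u * u = 1 ∧ u * canonicalInvolution p u = 1 :=
  stmt9_general p g h
end

section
/- Let p be an odd prime and D_{2p} = ⟨a, b | a^p = b^2 = 1, b^{-1}ab = a^{-1}⟩. In F_2 D_{2p}, with l = (p−1)/2 and u_{b, a^i} = 1 + (a^i + a^{-i})(1 + b), the product u_{b,a} u_{b,a^2} ⋯ u_{b,a^l} equals b(1 + Ĝ), where Ĝ denotes the sum of all elements of D_{2p}. -/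
open MonoidAlgebra DihedralGroup Finset

section Aux
variable (p : ℕ) [NeZero p]

local notation "o" => MonoidAlgebra.of (ZMod 2) (DihedralGroup p)

omit [NeZero p] in
lemma char2' (x : MonoidAlgebra (ZMod 2) (DihedralGroup p)) : x + x = 0 := by
  have : ((2 : ZMod 2)) • x = x + x := two_smul _ x
  rw [show (2 : ZMod 2) = 0 by decide, zero_smul] at this
  exact this.symm

omit [NeZero p] in
lemma bb : o (sr 0) * o (sr 0) = 1 := by
  rw [← map_mul, sr_mul_sr, sub_zero, ← DihedralGroup.one_def, map_one]

omit [NeZero p] in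
lemma tt : (1 + o (sr 0)) * (1 + o (sr 0)) = 0 := by
  simp only [add_mul, mul_add, one_mul, mul_one, bb]
  have h1 : (1 : MonoidAlgebra (ZMod 2) (DihedralGroup p)) + o (sr 0) + (o (sr 0) + 1)
      = (1 + 1) + (o (sr 0) + o (sr 0)) := by abel
  rw [h1, char2', char2', add_zero]

omit [NeZero p] in
lemma comm' (j : ZMod p) :
    (1 + o (sr 0)) * (o (r j) + o (r (-j))) = (o (r j) + o (r (-j))) * (1 + o (sr 0)) := by
  simp only [add_mul, mul_add, one_mul, mul_one, ← map_mul, sr_mul_r, r_mul_sr, zero_add,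
    zero_sub, sub_neg_eq_add, neg_neg, add_zero, sub_zero]
  abel

omit [NeZero p] in
lemma xx (i j : ZMod p) :
    ((o (r i) + o (r (-i))) * (1 + o (sr 0))) * ((o (r j) + o (r (-j))) * (1 + o (sr 0))) = 0 := by
  calc ((o (r i) + o (r (-i))) * (1 + o (sr 0))) * ((o (r j) + o (r (-j))) * (1 + o (sr 0)))
      = (o (r i) + o (r (-i))) * (((1 + o (sr 0)) * (o (r j) + o (r (-j)))) * (1 + o (sr 0))) := by
        noncomm_ring
    _ = (o (r i) + o (r (-i))) * ((o (r j) + o (r (-j))) * ((1 + o (sr 0)) * (1 + o (sr 0)))) := by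
        rw [comm', mul_assoc]
    _ = 0 := by rw [tt, mul_zero, mul_zero]


omit [NeZero p] in
lemma prod_formula (x : ℕ → MonoidAlgebra (ZMod 2) (DihedralGroup p))
    (hx : ∀ i j, x i * x j = 0) (n : ℕ) :
    ((List.range n).map (fun i => 1 + x (i + 1))).prod = 1 + ∑ i ∈ Finset.range n, x (i + 1) := by
  induction n with
  | zero => simp
  | succ n ih =>
    rw [List.range_succ, List.map_append, List.prod_append, ih]
    simp only [List.map_cons, List.map_nil, List.prod_cons, List.prod_nil, mul_one]
    rw [mul_add, mul_one, add_mul, one_mul, Finset.sum_mul]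
    rw [Finset.sum_eq_zero (fun i _ => hx (i + 1) (n + 1)), add_zero, Finset.sum_range_succ]
    abel

lemma sum_zmod (f : ZMod p → MonoidAlgebra (ZMod 2) (DihedralGroup p)) :
    ∑ j : ZMod p, f j = ∑ i ∈ Finset.range p, f (i : ℕ) := by
  refine (Finset.sum_nbij' (fun i : ℕ => (i : ZMod p)) (fun j : ZMod p => j.val) ?_ ?_ ?_ ?_ ?_).symm
  · intro a _; exact Finset.mem_univ _
  · intro a _; exact Finset.mem_range.2 (ZMod.val_lt a)
  · intro a ha; exact ZMod.val_cast_of_lt (Finset.mem_range.1 ha)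
  · intro a _; exact ZMod.natCast_rightInverse a
  · intro a _; rfl

lemma cast_key (l j : ℕ) (hj : j < l) :
    ((l + (l - 1 - j) + 1 : ℕ) : ZMod (2 * l + 1)) = -((j + 1 : ℕ) : ZMod (2 * l + 1)) := by
  have h : (l + (l - 1 - j) + 1) + (j + 1) = 2 * l + 1 := by omega
  refine eq_neg_of_add_eq_zero_left ?_
  rw [← Nat.cast_add, h, ZMod.natCast_self]

lemma S_eq (l : ℕ) (hl : p = 2 * l + 1) :
    ∑ j : ZMod p, o (r j) = 1 + ∑ i ∈ Finset.range l,
      (o (r ((i + 1 : ℕ) : ZMod p)) + o (r (-((i + 1 : ℕ) : ZMod p)))) := by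
  subst hl
  rw [sum_zmod, Finset.sum_range_succ'
      (fun i : ℕ => MonoidAlgebra.of (ZMod 2) (DihedralGroup (2 * l + 1))
        (r (i : ZMod (2 * l + 1)))) (2 * l),
    show (2 * l) = l + l from (two_mul l), Finset.sum_range_add]
  have h2 : (∑ i ∈ Finset.range l, MonoidAlgebra.of (ZMod 2) (DihedralGroup (l + l + 1))
        (r ((l + i + 1 : ℕ) : ZMod (l + l + 1))))
      = ∑ i ∈ Finset.range l, MonoidAlgebra.of (ZMod 2) (DihedralGroup (l + l + 1))
        (r (-((i + 1 : ℕ) : ZMod (l + l + 1)))) := by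
    rw [← Finset.sum_range_reflect (fun i => MonoidAlgebra.of (ZMod 2)
      (DihedralGroup (l + l + 1)) (r ((l + i + 1 : ℕ) : ZMod (l + l + 1)))) l]
    refine Finset.sum_congr rfl fun j hj => ?_
    have := cast_key l j (Finset.mem_range.1 hj)
    rw [show 2 * l + 1 = l + l + 1 by omega] at this
    rw [this]
  rw [h2]
  simp only [Nat.cast_zero, ← DihedralGroup.one_def, map_one, Finset.sum_add_distrib]
  abel

lemma Sb_comm : (∑ j : ZMod p, o (r j)) * o (sr 0) = o (sr 0) * ∑ j : ZMod p, o (r j) := by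
  rw [Finset.sum_mul, Finset.mul_sum]
  simp only [← map_mul, r_mul_sr, sr_mul_r, zero_sub, zero_add]
  exact Fintype.sum_equiv (Equiv.neg (ZMod p)) _ _ (fun j => rfl)

def dihEquiv : (ZMod p) ⊕ (ZMod p) ≃ DihedralGroup p where
  toFun := Sum.elim r sr
  invFun g := match g with
    | r j => Sum.inl j
    | sr j => Sum.inr j
  left_inv x := by rcases x with j | j <;> rfl
  right_inv g := by rcases g with j | j <;> rfl

lemma Ghat_eq : ∑ g : DihedralGroup p, o g
    = (∑ j : ZMod p, o (r j)) + o (sr 0) * ∑ j : ZMod p, o (r j) := by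
  rw [← Equiv.sum_comp (dihEquiv p) (fun g => o g), Fintype.sum_sum_type]
  rw [Finset.mul_sum]
  simp only [dihEquiv, Equiv.coe_fn_mk, Sum.elim_inl, Sum.elim_inr, ← map_mul, sr_mul_r, zero_add]

end Aux

open DihedralGroup in
theorem stmt10 (p : ℕ) (hp : p.Prime) (hodd : Odd p) [NeZero p] :
    let o := MonoidAlgebra.of (ZMod 2) (DihedralGroup p)
    let a : DihedralGroup p := DihedralGroup.r 1
    let b : DihedralGroup p := DihedralGroup.sr 0
    let u : ℕ → MonoidAlgebra (ZMod 2) (DihedralGroup p) :=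
      fun i => 1 + (o (a ^ i) + o (a⁻¹ ^ i)) * (1 + o b)
    let Ghat := ∑ g : DihedralGroup p, o g
    (((List.range ((p - 1) / 2)).map (fun i => u (i + 1))).prod) = o b * (1 + Ghat) := by
  intro o a b u Ghat
  obtain ⟨l, hl⟩ := hodd
  have hl' : p = 2 * l + 1 := by omega
  have hl2 : (p - 1) / 2 = l := by omega
  set X : ℕ → MonoidAlgebra (ZMod 2) (DihedralGroup p) := fun n =>
    (MonoidAlgebra.of (ZMod 2) (DihedralGroup p) (r ((n : ℕ) : ZMod p)) +
      MonoidAlgebra.of (ZMod 2) (DihedralGroup p) (r (-((n : ℕ) : ZMod p)))) *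
    (1 + MonoidAlgebra.of (ZMod 2) (DihedralGroup p) (sr 0)) with hX
  have hu : ∀ i : ℕ, u i = 1 + X i := by
    intro i
    have h1 : a ^ i = r ((i : ℕ) : ZMod p) := r_one_pow i
    have h2 : a⁻¹ ^ i = r (-((i : ℕ) : ZMod p)) := by
      rw [inv_pow, h1]
      refine inv_eq_of_mul_eq_one_right ?_
      rw [r_mul_r, add_neg_cancel, ← DihedralGroup.one_def]
    simp only [u, h1, h2, hX, b, o]
  have hfun : (fun i => u (i + 1)) = (fun i => 1 + X (i + 1)) := funext fun i => hu (i + 1)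
  rw [hl2, hfun, prod_formula p X (fun i j => xx p _ _) l]
  have hsum : ∑ i ∈ Finset.range l, X (i + 1) =
      ((∑ j : ZMod p, MonoidAlgebra.of (ZMod 2) (DihedralGroup p) (r j)) + 1) *
      (1 + MonoidAlgebra.of (ZMod 2) (DihedralGroup p) (sr 0)) := by
    rw [hX, ← Finset.sum_mul]
    congr 1
    have h11 : (1 : MonoidAlgebra (ZMod 2) (DihedralGroup p)) + 1 = 0 := char2' p 1
    have habel : (1 : MonoidAlgebra (ZMod 2) (DihedralGroup p)) +
        (∑ i ∈ Finset.range l, (MonoidAlgebra.of (ZMod 2) (DihedralGroup p) (r ((i + 1 : ℕ) : ZMod p)) +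
          MonoidAlgebra.of (ZMod 2) (DihedralGroup p) (r (-((i + 1 : ℕ) : ZMod p))))) + 1
        = (∑ i ∈ Finset.range l, (MonoidAlgebra.of (ZMod 2) (DihedralGroup p) (r ((i + 1 : ℕ) : ZMod p)) +
          MonoidAlgebra.of (ZMod 2) (DihedralGroup p) (r (-((i + 1 : ℕ) : ZMod p))))) + (1 + 1) := by abel
    rw [S_eq p l hl', habel, h11, add_zero]
  rw [hsum]
  have hb2 := bb p
  have hsb := Sb_comm p
  have h11 : (1 : MonoidAlgebra (ZMod 2) (DihedralGroup p)) + 1 = 0 := char2' p 1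
  set S := ∑ j : ZMod p, MonoidAlgebra.of (ZMod 2) (DihedralGroup p) (r j) with hS
  set ob := MonoidAlgebra.of (ZMod 2) (DihedralGroup p) (sr 0) with hob
  have hGhat : Ghat = S + ob * S := by
    simp only [Ghat, o, hS, hob]
    exact Ghat_eq p
  show 1 + (S + 1) * (1 + ob) = ob * (1 + Ghat)
  rw [hGhat]
  calc 1 + (S + 1) * (1 + ob)
      = (1 + 1) + (S * ob + S + ob) := by
        simp only [add_mul, mul_add, one_mul, mul_one]; abel
    _ = ob * S + S + ob := by rw [h11, zero_add, hsb]
    _ = ob * (1 + (S + ob * S)) := by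
        rw [mul_add, mul_one, mul_add, ← mul_assoc, hb2, one_mul]; abel
end

section
/- Let p be an odd prime. The kernel of the algebra homomorphism T': F_2 D_{2p} → F_2 ⊕ ⨁_{i=1}^k M_2(F_2(γ_i + γ_i^{-1})) (induced by the trivial representation and the 2-dimensional representations a ↦ [[0,1],[1,γ_i+γ_i^{-1}]], b ↦ [[1,0],[γ_i+γ_i^{-1},1]], where γ_1,…,γ_k exhaust the irreducible factors of Φ_p over F_2 up to inversion) is the one-dimensional ideal F_2·Ĝ spanned by the sum of all group elements. -/
/-!
Over `K = AlgebraicClosure 𝔽₂`, the matrix `P = !![1, 1; γ, γ⁻¹]` conjugates the representation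
`r ↦ !![0, 1; 1, γ + γ⁻¹]`, `s ↦ !![1, 0; γ + γ⁻¹, 1]` into the monomial one
`r ↦ diag(γ, γ⁻¹)`, `s ↦ !![0, 1; 1, 0]` (this needs characteristic `2`). Writing
`x = c(r) + s · d(r)` with `deg c, deg d < p`, the `i`-th component of `T' x` therefore vanishes iff
`c` and `d` vanish at `γᵢ` and `γᵢ⁻¹`. Since every primitive `p`-th root of unity shares its minimal
polynomial over `𝔽₂` with some `γᵢ` or `γᵢ⁻¹`, `c` and `d` then vanish at all of them, so both are
constant multiples of `Φ_p = 1 + X + ⋯ + X ^ (p - 1)`: `x` is constant on rotations and on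
reflections. As `p` is odd, the trivial component `∑ g, x g` is the sum of these two constants, so
they agree and `x` is a multiple of `∑ g, g`.
-/

open MonoidAlgebra IntermediateField Polynomial Matrix DihedralGroup

theorem ZMod.sum_val_eq_sum_range {n : ℕ} [NeZero n] {M : Type*} [AddCommMonoid M] (f : ℕ → M) :
    ∑ j : ZMod n, f j.val = ∑ m ∈ Finset.range n, f m := by
  obtain ⟨m, rfl⟩ := Nat.exists_eq_succ_of_ne_zero (NeZero.ne n)
  exact Fin.sum_univ_eq_sum_range f _

theorem IsPrimitiveRoot.inv_ne_self {G : Type*} [CommGroupWithZero G] {ζ : G} {k : ℕ}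
    (hζ : IsPrimitiveRoot ζ k) (hk : 2 < k) : ζ⁻¹ ≠ ζ := by
  intro h
  have hζ0 : ζ ≠ 0 := hζ.ne_zero (by omega)
  have hsq : ζ ^ 2 = 1 := by rw [sq]; nth_rw 1 [← h]; exact inv_mul_cancel₀ hζ0
  have := Nat.le_of_dvd two_pos ((hζ.pow_eq_one_iff_dvd 2).1 hsq)
  omega

namespace Polynomial

section ofZModCoeffs

variable {R : Type*} [CommSemiring R] {n : ℕ} [NeZero n]

noncomputable def ofZModCoeffs (c : ZMod n → R) : R[X] :=
  ∑ j, monomial j.val (c j)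

theorem coeff_ofZModCoeffs_val (c : ZMod n → R) (j : ZMod n) :
    (ofZModCoeffs c).coeff j.val = c j := by
  simp [ofZModCoeffs, finsetSum_coeff, coeff_monomial, (ZMod.val_injective n).eq_iff]

theorem natDegree_ofZModCoeffs_lt (c : ZMod n → R) : (ofZModCoeffs c).natDegree < n := by
  rw [ofZModCoeffs, Nat.lt_iff_le_pred (NeZero.pos n)]
  exact natDegree_sum_le_of_forall_le _ _ fun j _ =>
    (natDegree_monomial_le _).trans (Nat.le_pred_of_lt (ZMod.val_lt j))

theorem aeval_ofZModCoeffs {A : Type*} [Semiring A] [Algebra R A] (c : ZMod n → R) (z : A) :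
    aeval z (ofZModCoeffs c) = ∑ j, c j • z ^ j.val := by
  simp [ofZModCoeffs, aeval_monomial, Algebra.smul_def]

theorem aeval_ofZModCoeffs_const_of_isPrimitiveRoot {A : Type*} [CommRing A] [IsDomain A]
    [Algebra R A] (a : R) {ζ : A} (hζ : IsPrimitiveRoot ζ n) (hn : 1 < n) :
    aeval ζ (ofZModCoeffs fun _ : ZMod n => a) = 0 := by
  rw [aeval_ofZModCoeffs, ← Finset.smul_sum, ZMod.sum_val_eq_sum_range (ζ ^ ·),
    hζ.geom_sum_eq_zero hn, smul_zero]

end ofZModCoeffs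

theorem coeff_cyclotomic_prime_of_lt {R : Type*} [Ring R] {p m : ℕ} [Fact p.Prime] (hm : m < p) :
    (cyclotomic p R).coeff m = 1 := by
  simp [cyclotomic_prime, coeff_X_pow, hm]

theorem aeval_eq_zero_of_minpoly_eq {F A : Type*} [Field F] [Ring A] [Algebra F A]
    {x y : A} {f : F[X]} (h : minpoly F x = minpoly F y) (hy : aeval y f = 0) : aeval x f = 0 :=
  aeval_eq_zero_of_dvd_aeval_eq_zero (h ▸ minpoly.dvd F y hy) (minpoly.aeval F x)

variable {F : Type*} [Field F] (K : Type*) [Field K] [Algebra F K] [IsAlgClosed K]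

theorem cyclotomic_dvd_of_forall_isPrimitiveRoot_aeval_eq_zero {n : ℕ} [NeZero (n : F)]
    {f : F[X]} (hf : ∀ ζ : K, IsPrimitiveRoot ζ n → aeval ζ f = 0) : cyclotomic n F ∣ f := by
  rcases eq_or_ne f 0 with rfl | hf0
  · exact dvd_zero _
  have : NeZero n := .of_neZero_natCast F
  have : NeZero (n : K) := .of_faithfulSMul F K n
  obtain ⟨ζ, hζ⟩ := HasEnoughRootsOfUnity.exists_primitiveRoot K n
  rw [← map_dvd_map' (algebraMap F K), map_cyclotomic, cyclotomic_eq_prod_X_sub_primitiveRoots hζ,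
    Finset.prod_eq_multiset_prod, Multiset.prod_X_sub_C_dvd_iff_le_roots (map_ne_zero hf0),
    Multiset.le_iff_subset (primitiveRoots n K).nodup]
  intro z hz
  rw [mem_roots (map_ne_zero hf0), IsRoot, eval_map_algebraMap]
  exact hf z ((mem_primitiveRoots (NeZero.pos n)).1 hz)

theorem coeff_eq_coeff_zero_of_forall_isPrimitiveRoot_aeval_eq_zero {p : ℕ} [Fact p.Prime]
    [NeZero (p : F)] {f : F[X]} (hdeg : f.natDegree < p)
    (hf : ∀ ζ : K, IsPrimitiveRoot ζ p → aeval ζ f = 0) {m : ℕ} (hm : m < p) :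
    f.coeff m = f.coeff 0 := by
  have hp : p.Prime := Fact.out
  rw [eq_leadingCoeff_mul_of_monic_of_dvd_of_natDegree_le (cyclotomic.monic p F)
    (cyclotomic_dvd_of_forall_isPrimitiveRoot_aeval_eq_zero K hf)
    (by rw [natDegree_cyclotomic, Nat.totient_prime hp]; omega), coeff_C_mul, coeff_C_mul,
    coeff_cyclotomic_prime_of_lt hm, coeff_cyclotomic_prime_of_lt hp.pos]

theorem apply_eq_apply_zero_of_forall_isPrimitiveRoot_aeval_ofZModCoeffs_eq_zero {p : ℕ}
    [Fact p.Prime] [NeZero (p : F)] {c : ZMod p → F}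
    (hc : ∀ ζ : K, IsPrimitiveRoot ζ p → aeval ζ (ofZModCoeffs c) = 0) (j : ZMod p) :
    c j = c 0 := by
  rw [← coeff_ofZModCoeffs_val c j, ← coeff_ofZModCoeffs_val c 0, ZMod.val_zero]
  exact coeff_eq_coeff_zero_of_forall_isPrimitiveRoot_aeval_eq_zero K
    (natDegree_ofZModCoeffs_lt c) hc (ZMod.val_lt j)

end Polynomial

namespace MonoidAlgebra

variable {R G : Type*} [CommSemiring R] [Monoid G] [Fintype G]

theorem algHom_apply_eq_sum {A : Type*} [Semiring A] [Algebra R A]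
    (φ : MonoidAlgebra R G →ₐ[R] A) (x : MonoidAlgebra R G) :
    φ x = ∑ g, x.coeff g • φ (of R G g) := by
  rw [lift_unique φ x, Finsupp.sum_fintype _ _ (by simp)]
  rfl

theorem coeff_sum_of (g : G) : (∑ h, of R G h).coeff g = 1 := by
  classical
  simp [coeff_sum, of_apply]

theorem eq_smul_sum_of_of_forall_coeff_eq {x : MonoidAlgebra R G} {a : R}
    (hx : ∀ g, x.coeff g = a) : x = a • ∑ g, of R G g := by
  ext g
  rw [coeff_smul_apply, coeff_sum_of, smul_eq_mul, mul_one, hx]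

end MonoidAlgebra

section CharTwo

variable {L : Type*} [Field L] [CharP L 2] {γ : L}

theorem rotation_mul_eigenbasis (hγ : γ ≠ 0) :
    !![0, 1; 1, γ + γ⁻¹] * !![1, 1; γ, γ⁻¹] = !![1, 1; γ, γ⁻¹] * diagonal ![γ, γ⁻¹] := by
  have h2 : (2 : L) = 0 := CharTwo.two_eq_zero
  have hγγ : γ * γ⁻¹ = 1 := mul_inv_cancel₀ hγ
  ext i j
  fin_cases i <;> fin_cases j <;> simp [Matrix.mul_apply, Fin.sum_univ_two] <;>
    linear_combination h2 + hγγ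

theorem reflection_mul_eigenbasis :
    !![1, 0; γ + γ⁻¹, 1] * !![1, 1; γ, γ⁻¹] = !![1, 1; γ, γ⁻¹] * !![0, 1; 1, 0] := by
  have h2 : (2 : L) = 0 := CharTwo.two_eq_zero
  ext i j
  fin_cases i <;> fin_cases j <;> simp [Matrix.mul_apply, Fin.sum_univ_two]
  · linear_combination γ * h2
  · linear_combination γ⁻¹ * h2

end CharTwo

namespace DihedralGroup

variable {n : ℕ} [NeZero n]

theorem r_one_pow_val (j : ZMod n) : (r 1 : DihedralGroup n) ^ j.val = r j := by
  rw [r_one_pow, ZMod.natCast_zmod_val]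

theorem sum_univ {M : Type*} [AddCommMonoid M] (f : DihedralGroup n → M) :
    ∑ g, f g = ∑ j, f (r j) + ∑ j, f (sr j) := by
  rw [← Equiv.sum_comp equivSum.symm, Fintype.sum_sum_type]
  rfl

theorem monoidHom_ext {M : Type*} [Monoid M] {f g : DihedralGroup n →* M}
    (hr : f (r 1) = g (r 1)) (hsr : f (sr 0) = g (sr 0)) : f = g := by
  have hr' (j : ZMod n) : f (r j) = g (r j) := by rw [← r_one_pow_val, map_pow, map_pow, hr]
  ext (j | j)
  · exact hr' j
  · rw [← zero_add j, ← sr_mul_r, map_mul, map_mul, hsr, hr']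

variable {R : Type*} [CommSemiring R]

/-- Writing `x = c(r 1) + sr 0 * d(r 1)` in `R[Dₙ]`, this is `c`; `reflectionPoly x` is `d`. -/
noncomputable def rotationPoly (x : MonoidAlgebra R (DihedralGroup n)) : R[X] :=
  ofZModCoeffs fun j => x.coeff (r j)

noncomputable def reflectionPoly (x : MonoidAlgebra R (DihedralGroup n)) : R[X] :=
  ofZModCoeffs fun j => x.coeff (sr j)

theorem eq_smul_sum_of_forall_isPrimitiveRoot_aeval_eq_zero {F : Type*} [Field F] [CharP F 2]
    (K : Type*) [Field K] [Algebra F K] [IsAlgClosed K] {p : ℕ} [Fact p.Prime] [NeZero p]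
    (hodd : Odd p) {x : MonoidAlgebra F (DihedralGroup p)} (hsum : ∑ g, x.coeff g = 0)
    (hrot : ∀ ζ : K, IsPrimitiveRoot ζ p → aeval ζ (rotationPoly x) = 0)
    (hrefl : ∀ ζ : K, IsPrimitiveRoot ζ p → aeval ζ (reflectionPoly x) = 0) :
    x = x.coeff (r 0) • ∑ g, MonoidAlgebra.of F (DihedralGroup p) g := by
  have hp1 : (p : F) = 1 := by
    obtain ⟨m, rfl⟩ := hodd
    simp [CharTwo.two_eq_zero]
  have : NeZero (p : F) := ⟨hp1 ▸ one_ne_zero⟩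
  have hr := apply_eq_apply_zero_of_forall_isPrimitiveRoot_aeval_ofZModCoeffs_eq_zero K hrot
  have hsr := apply_eq_apply_zero_of_forall_isPrimitiveRoot_aeval_ofZModCoeffs_eq_zero K hrefl
  have hsum' : x.coeff (r 0) + x.coeff (sr 0) = 0 := by
    simpa [sum_univ, hr, hsr, hp1] using hsum
  refine eq_smul_sum_of_of_forall_coeff_eq ?_
  rintro (j | j)
  exacts [hr j, (hsr j).trans (CharTwo.add_eq_zero.1 hsum').symm]

section MatrixRepresentation

variable {L : Type*} [Field L] [CharP L 2] [Algebra R L] {γ : L}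
  {ρ : MonoidAlgebra R (DihedralGroup n) →ₐ[R] Matrix (Fin 2) (Fin 2) L}

theorem algHom_of_r_mul_eigenbasis (hγ : γ ≠ 0) (hr : ρ (of R _ (r 1)) = !![0, 1; 1, γ + γ⁻¹])
    (j : ZMod n) :
    ρ (of R _ (r j)) * !![1, 1; γ, γ⁻¹] =
      !![1, 1; γ, γ⁻¹] * diagonal ![γ ^ j.val, γ⁻¹ ^ j.val] := by
  have h : SemiconjBy !![1, 1; γ, γ⁻¹] (diagonal ![γ, γ⁻¹]) !![0, 1; 1, γ + γ⁻¹] :=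
    (rotation_mul_eigenbasis hγ).symm
  rw [← r_one_pow_val, map_pow, map_pow, hr, ← (h.pow_right j.val).eq, diagonal_pow]
  congr 2
  ext i
  fin_cases i <;> rfl

theorem algHom_of_sr_mul_eigenbasis (hγ : γ ≠ 0) (hr : ρ (of R _ (r 1)) = !![0, 1; 1, γ + γ⁻¹])
    (hsr : ρ (of R _ (sr 0)) = !![1, 0; γ + γ⁻¹, 1]) (j : ZMod n) :
    ρ (of R _ (sr j)) * !![1, 1; γ, γ⁻¹] =
      !![1, 1; γ, γ⁻¹] * !![0, γ⁻¹ ^ j.val; γ ^ j.val, 0] := by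
  rw [← zero_add j, ← sr_mul_r, map_mul, map_mul, hsr, mul_assoc, zero_add,
    algHom_of_r_mul_eigenbasis hγ hr, ← mul_assoc, reflection_mul_eigenbasis, mul_assoc]
  congr 1
  ext i k
  fin_cases i <;> fin_cases k <;> simp [Matrix.mul_apply, Fin.sum_univ_two]

theorem algHom_mul_eigenbasis (hγ : γ ≠ 0) (hr : ρ (of R _ (r 1)) = !![0, 1; 1, γ + γ⁻¹])
    (hsr : ρ (of R _ (sr 0)) = !![1, 0; γ + γ⁻¹, 1]) (x : MonoidAlgebra R (DihedralGroup n)) :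
    ρ x * !![1, 1; γ, γ⁻¹] = !![1, 1; γ, γ⁻¹] *
      !![aeval γ (rotationPoly x), aeval γ⁻¹ (reflectionPoly x);
        aeval γ (reflectionPoly x), aeval γ⁻¹ (rotationPoly x)] := by
  simp_rw [algHom_apply_eq_sum ρ x, sum_univ, add_mul, Finset.sum_mul, smul_mul_assoc,
    algHom_of_r_mul_eigenbasis hγ hr, algHom_of_sr_mul_eigenbasis hγ hr hsr, ← mul_smul_comm,
    ← Finset.mul_sum, ← mul_add]
  congr 1
  ext i k
  fin_cases i <;> fin_cases k <;>
    simp [rotationPoly, reflectionPoly, aeval_ofZModCoeffs, Matrix.sum_apply]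

theorem algHom_eq_zero_iff_aeval_eq_zero (hγ : γ ≠ 0) (hγ' : γ⁻¹ ≠ γ)
    (hr : ρ (of R _ (r 1)) = !![0, 1; 1, γ + γ⁻¹])
    (hsr : ρ (of R _ (sr 0)) = !![1, 0; γ + γ⁻¹, 1]) (x : MonoidAlgebra R (DihedralGroup n)) :
    ρ x = 0 ↔ ∀ z ∈ ({γ, γ⁻¹} : Set L),
      aeval z (rotationPoly x) = 0 ∧ aeval z (reflectionPoly x) = 0 := by
  have hP : IsUnit !![1, 1; γ, γ⁻¹] := by
    rw [isUnit_iff_isUnit_det, det_fin_two_of, one_mul, one_mul]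
    exact (sub_ne_zero.2 hγ').isUnit
  rw [← hP.mul_left_eq_zero, algHom_mul_eigenbasis hγ hr hsr, hP.mul_right_eq_zero]
  simp only [← Matrix.ext_iff, Fin.forall_fin_two, Matrix.of_apply, Matrix.zero_apply, cons_val',
    cons_val_zero, cons_val_one, cons_val_fin_one, Set.mem_insert_iff, Set.mem_singleton_iff,
    forall_eq_or_imp, forall_eq]
  tauto

end MatrixRepresentation

theorem algHom_prod_eq_zero_iff {F L : Type*} [Field F] [Field L] [CharP L 2] [Algebra F L]
    {k : ℕ} {γ : Fin k → L}
    (hγ : ∀ i, γ i ≠ 0) (hγ' : ∀ i, (γ i)⁻¹ ≠ γ i)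
    (T : MonoidAlgebra F (DihedralGroup n) →ₐ[F]
      F × ((i : Fin k) → Matrix (Fin 2) (Fin 2) F⟮γ i + (γ i)⁻¹⟯))
    (hTa : T (of F _ (r 1)) = (1, fun i => !![0, 1; 1, AdjoinSimple.gen F (γ i + (γ i)⁻¹)]))
    (hTb : T (of F _ (sr 0)) = (1, fun i => !![1, 0; AdjoinSimple.gen F (γ i + (γ i)⁻¹), 1]))
    (x : MonoidAlgebra F (DihedralGroup n)) :
    T x = 0 ↔ ∑ g, x.coeff g = 0 ∧ ∀ i, ∀ z ∈ ({γ i, (γ i)⁻¹} : Set L),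
      aeval z (rotationPoly x) = 0 ∧ aeval z (reflectionPoly x) = 0 := by
  have hfst : (T x).1 = ∑ g, x.coeff g := by
    have htriv : ((AlgHom.fst F _ _).comp T : MonoidAlgebra F (DihedralGroup n) →* F).comp
        (of F _) = 1 :=
      monoidHom_ext (by simp [-MonoidAlgebra.of_apply, hTa])
        (by simp [-MonoidAlgebra.of_apply, hTb])
    rw [algHom_apply_eq_sum T x, Prod.fst_sum]
    refine Finset.sum_congr rfl fun g _ => ?_
    simpa using congr(x.coeff g • $(DFunLike.congr_fun htriv g))
  let ρ (i : Fin k) : MonoidAlgebra F (DihedralGroup n) →ₐ[F] Matrix (Fin 2) (Fin 2) L :=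
    (F⟮γ i + (γ i)⁻¹⟯.val.mapMatrix).comp ((Pi.evalAlgHom F _ i).comp ((AlgHom.snd F _ _).comp T))
  have hsnd (i : Fin k) : (T x).2 i = 0 ↔ ρ i x = 0 :=
    (map_eq_zero_iff (F⟮γ i + (γ i)⁻¹⟯.val.mapMatrix)
      (Matrix.map_injective Subtype.val_injective)).symm
  have hρr (i : Fin k) : ρ i (of F _ (r 1)) = !![0, 1; 1, γ i + (γ i)⁻¹] := by
    simp only [ρ, AlgHom.comp_apply, hTa]
    ext a b
    fin_cases a <;> fin_cases b <;> simp
  have hρsr (i : Fin k) : ρ i (of F _ (sr 0)) = !![1, 0; γ i + (γ i)⁻¹, 1] := by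
    simp only [ρ, AlgHom.comp_apply, hTb]
    ext a b
    fin_cases a <;> fin_cases b <;> simp
  simp only [Prod.ext_iff, funext_iff, hfst, hsnd, Prod.fst_zero, Prod.snd_zero, Pi.zero_apply,
    algHom_eq_zero_iff_aeval_eq_zero (hγ _) (hγ' _) (hρr _) (hρsr _)]

end DihedralGroup

theorem stmt12_general (p : ℕ) (hp : p.Prime) (hodd : Odd p) [NeZero p]
    (k : ℕ) (γ : Fin k → AlgebraicClosure (ZMod 2))
    (hγ : ∀ i, IsPrimitiveRoot (γ i) p)
    (hexh : ∀ ζ : AlgebraicClosure (ZMod 2), IsPrimitiveRoot ζ p →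
      ∃ i, minpoly (ZMod 2) ζ = minpoly (ZMod 2) (γ i) ∨
        minpoly (ZMod 2) ζ = minpoly (ZMod 2) (γ i)⁻¹)
    (T' : MonoidAlgebra (ZMod 2) (DihedralGroup p) →ₐ[ZMod 2]
      (ZMod 2) × ((i : Fin k) → Matrix (Fin 2) (Fin 2) ((ZMod 2)⟮γ i + (γ i)⁻¹⟯)))
    (hTa : T' (MonoidAlgebra.of (ZMod 2) (DihedralGroup p) (DihedralGroup.r 1)) =
      (1, fun i => !![0, 1; 1, IntermediateField.AdjoinSimple.gen (ZMod 2) (γ i + (γ i)⁻¹)]))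
    (hTb : T' (MonoidAlgebra.of (ZMod 2) (DihedralGroup p) (DihedralGroup.sr 0)) =
      (1, fun i => !![1, 0; IntermediateField.AdjoinSimple.gen (ZMod 2) (γ i + (γ i)⁻¹), 1])) :
    RingHom.ker T'.toRingHom =
      Ideal.span {∑ g : DihedralGroup p, MonoidAlgebra.of (ZMod 2) (DihedralGroup p) g} := by
  have : Fact p.Prime := ⟨hp⟩
  have hp2 : 2 < p := hp.two_le.lt_of_ne fun h => Nat.not_even_iff_odd.2 hodd (h ▸ even_two)
  have hker := algHom_prod_eq_zero_iff (fun i => (hγ i).ne_zero hp.ne_zero)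
    (fun i => (hγ i).inv_ne_self hp2) T' hTa hTb
  refine le_antisymm (fun x hx => ?_) (Ideal.span_le.2 (Set.singleton_subset_iff.2 ?_))
  · obtain ⟨hsum, hroots⟩ := (hker x).1 hx
    have hprim {f : (ZMod 2)[X]}
        (hf : ∀ i, ∀ z ∈ ({γ i, (γ i)⁻¹} : Set (AlgebraicClosure (ZMod 2))), aeval z f = 0)
        (ζ : AlgebraicClosure (ZMod 2)) (hζ : IsPrimitiveRoot ζ p) : aeval ζ f = 0 := by
      obtain ⟨i, hi | hi⟩ := hexh ζ hζ
      exacts [aeval_eq_zero_of_minpoly_eq hi (hf i _ (by simp)),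
        aeval_eq_zero_of_minpoly_eq hi (hf i _ (by simp))]
    rw [eq_smul_sum_of_forall_isPrimitiveRoot_aeval_eq_zero _ hodd hsum
      (hprim fun i z hz => (hroots i z hz).1) (hprim fun i z hz => (hroots i z hz).2),
      Algebra.smul_def]
    exact Ideal.mul_mem_left _ _ (Ideal.mem_span_singleton_self _)
  · refine (hker _).2 ⟨by simp [DihedralGroup.card, CharTwo.two_eq_zero], fun i z hz => ?_⟩
    have hz' : IsPrimitiveRoot z p := by rcases hz with rfl | rfl; exacts [hγ i, (hγ i).inv]
    simp only [rotationPoly, reflectionPoly, coeff_sum_of]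
    exact ⟨aeval_ofZModCoeffs_const_of_isPrimitiveRoot 1 hz' hp.one_lt,
      aeval_ofZModCoeffs_const_of_isPrimitiveRoot 1 hz' hp.one_lt⟩

theorem stmt12 (p : ℕ) (hp : p.Prime) (hodd : Odd p) [NeZero p]
    (k : ℕ) (γ : Fin k → AlgebraicClosure (ZMod 2))
    (hγ : ∀ i, IsPrimitiveRoot (γ i) p)
    (hdist : ∀ i j, i ≠ j → minpoly (ZMod 2) (γ i) ≠ minpoly (ZMod 2) (γ j))
    (hdist' : ∀ i j, i ≠ j → minpoly (ZMod 2) (γ i) ≠ minpoly (ZMod 2) (γ j)⁻¹)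
    (hexh : ∀ ζ : AlgebraicClosure (ZMod 2), IsPrimitiveRoot ζ p →
      ∃ i, minpoly (ZMod 2) ζ = minpoly (ZMod 2) (γ i) ∨
        minpoly (ZMod 2) ζ = minpoly (ZMod 2) (γ i)⁻¹)
    (T' : MonoidAlgebra (ZMod 2) (DihedralGroup p) →ₐ[ZMod 2]
      (ZMod 2) × ((i : Fin k) → Matrix (Fin 2) (Fin 2) ((ZMod 2)⟮γ i + (γ i)⁻¹⟯)))
    (hTa : T' (MonoidAlgebra.of (ZMod 2) (DihedralGroup p) (DihedralGroup.r 1)) =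
      (1, fun i => !![0, 1; 1, IntermediateField.AdjoinSimple.gen (ZMod 2) (γ i + (γ i)⁻¹)]))
    (hTb : T' (MonoidAlgebra.of (ZMod 2) (DihedralGroup p) (DihedralGroup.sr 0)) =
      (1, fun i => !![1, 0; IntermediateField.AdjoinSimple.gen (ZMod 2) (γ i + (γ i)⁻¹), 1])) :
    RingHom.ker T'.toRingHom =
      Ideal.span {∑ g : DihedralGroup p, MonoidAlgebra.of (ZMod 2) (DihedralGroup p) g} :=
  stmt12_general p hp hodd k γ hγ hexh T' hTa hTb
end

section
/- Let p be an odd prime and D_{2p} = ⟨a, b⟩ the dihedral group of order 2p. The intersection of D_{2p} (embedded in the unit group of F_2 D_{2p}) with the subgroup B generated by all bicyclic units equals ⟨a⟩, the cyclic subgroup of order p. -/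
/-!
A bicyclic unit `1 + (g - 1) h ĝ` maps to `1` under any map of group rings induced by a hom to a
commutative group, because there `(g - 1) ĝ` becomes `g ^ orderOf g - 1 = 0`; applied to the hom
`D₂ₚ → C₂` killing `⟨a⟩` this rules out the reflections.

Conversely, for a reflection `s` put `t = 1 + s`. Then `t² = 0` and
`u_{s,aᵏ} = 1 + (aᵏ + a⁻ᵏ) t` with `aᵏ + a⁻ᵏ` commuting with `t`, so these units multiply by adding
their coefficients and `1 + C t ∈ B` for `C = ∑_{k=1}^{l} (aᵏ + a⁻ᵏ)`, `p = 2l + 1`. Telescoping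
gives `(a - 1)(1 + C) = a^{l+1} - a^{-l} = 0`, hence `a (1 + C (1 + b)) = 1 + C (1 + ab)` and
`a ∈ B`.
-/

open MonoidAlgebra

/-- The subgroup of the unit group of `F₂ D₂ₚ` generated by the bicyclic units
`u_{g,h} = 1 + (g - 1) h ĝ`. -/
noncomputable def bicyclicGroup (p : ℕ) :
    Subgroup (MonoidAlgebra (ZMod 2) (DihedralGroup p))ˣ :=
  Subgroup.closure {u | ∃ g h : DihedralGroup p,
    (u : MonoidAlgebra (ZMod 2) (DihedralGroup p)) =
      1 + (MonoidAlgebra.of (ZMod 2) (DihedralGroup p) g - 1) *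
        MonoidAlgebra.of (ZMod 2) (DihedralGroup p) h *
        ∑ i ∈ Finset.range (orderOf g), MonoidAlgebra.of (ZMod 2) (DihedralGroup p) (g ^ i)}

open Finset DihedralGroup

section SquareZero

variable {R : Type*} [Ring R] {t : R}

theorem one_add_mul_mul_one_add_mul (ht : t * t = 0) (c : R) {d : R} (hd : Commute d t) :
    (1 + c * t) * (1 + d * t) = 1 + (c + d) * t := by
  have hcross : c * t * (d * t) = 0 := by
    rw [mul_assoc, ← mul_assoc t, ← hd.eq, mul_assoc d, ht, mul_zero, mul_zero]
  rw [mul_add, add_mul, add_mul, one_mul, mul_one, one_mul, hcross, add_zero, add_mul, add_assoc]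

theorem exists_mem_val_eq_one_add_sum_mul (S : Subgroup Rˣ) (ht : t * t = 0) {ι : Type*}
    (s : Finset ι) (c : ι → R)
    (hc : ∀ i ∈ s, Commute (c i) t ∧ ∃ U ∈ S, (U : R) = 1 + c i * t) :
    ∃ U ∈ S, (U : R) = 1 + (∑ i ∈ s, c i) * t := by
  refine (sum_induction c (fun x => Commute x t ∧ ∃ U ∈ S, (U : R) = 1 + x * t) ?_ ?_ hc).2
  · rintro x y ⟨hx, U, hUS, hU⟩ ⟨hy, V, hVS, hV⟩
    exact ⟨hx.add_left hy, U * V, mul_mem hUS hVS,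
      by rw [Units.val_mul, hU, hV, one_add_mul_mul_one_add_mul ht x hy]⟩
  · exact ⟨Commute.zero_left t, 1, one_mem S, by simp⟩

end SquareZero

namespace MonoidAlgebra

instance charP {k G : Type*} [CommSemiring k] [Monoid G] (n : ℕ) [CharP k n] :
    CharP k[G] n :=
  charP_of_injective_ringHom (f := singleOneRingHom) single_right_injective n

theorem mapDomainRingHom_of {k G H : Type*} [CommSemiring k] [Monoid G] [Monoid H]
    (f : G →* H) (g : G) : mapDomainRingHom k f (of k G g) = of k H (f g) := by
  simp [of_apply, mapDomain_single]

theorem mapDomainRingHom_bicyclic_eq_one {k G H : Type*} [CommRing k] [Monoid G] [CommMonoid H]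
    (f : G →* H) (g h : G) :
    mapDomainRingHom k f
      (1 + (of k G g - 1) * of k G h * ∑ i ∈ range (orderOf g), of k G (g ^ i)) = 1 := by
  simp only [map_add, map_one, map_mul, map_sub, map_sum, mapDomainRingHom_of, map_pow]
  rw [mul_right_comm, mul_comm (_ - 1), geom_sum_mul, ← map_pow, ← map_pow, pow_orderOf_eq_one,
    map_one, map_one, sub_self, zero_mul, add_zero]

end MonoidAlgebra

namespace DihedralGroup

variable {n : ℕ}

def parity : DihedralGroup n →* Multiplicative (ZMod 2) where
  toFun
    | r _ => 1
    | sr _ => Multiplicative.ofAdd 1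
  map_one' := rfl
  map_mul' := by
    rintro (a | a) (b | b) <;> simp only [r_mul_r, r_mul_sr, sr_mul_r, sr_mul_sr] <;> rfl

@[simp] theorem parity_r (i : ZMod n) : parity (r i) = 1 := rfl

@[simp] theorem parity_sr (i : ZMod n) : parity (sr i) = Multiplicative.ofAdd 1 := rfl

theorem parity_eq_one_iff {g : DihedralGroup n} :
    parity g = 1 ↔ g ∈ Subgroup.zpowers (r 1) := by
  rw [Subgroup.mem_zpowers_iff]
  rcases g with j | j
  · simp only [parity_r, r_one_zpow, r.injEq, true_iff]
    exact ⟨j.cast, ZMod.intCast_zmod_cast j⟩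
  · simp

variable {p : ℕ}

noncomputable abbrev ofR (x : ZMod p) : MonoidAlgebra (ZMod 2) (DihedralGroup p) := of _ _ (r x)

noncomputable abbrev ofSR (x : ZMod p) : MonoidAlgebra (ZMod 2) (DihedralGroup p) := of _ _ (sr x)

theorem ofR_zero : ofR (0 : ZMod p) = 1 := by
  rw [ofR, r_zero, map_one]

theorem ofR_mul_ofR (x y : ZMod p) : ofR x * ofR y = ofR (x + y) := by
  rw [← map_mul, r_mul_r]

theorem ofR_mul_ofSR (x y : ZMod p) : ofR x * ofSR y = ofSR (y - x) := by
  rw [← map_mul, r_mul_sr]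

theorem ofSR_mul_ofR (x y : ZMod p) : ofSR x * ofR y = ofSR (x + y) := by
  rw [← map_mul, sr_mul_r]

theorem ofSR_mul_ofSR (x y : ZMod p) : ofSR x * ofSR y = ofR (y - x) := by
  rw [← map_mul, sr_mul_sr]

theorem commute_ofR (x y : ZMod p) : Commute (ofR x) (ofR y) := by
  rw [Commute, SemiconjBy, ofR_mul_ofR, ofR_mul_ofR, add_comm]

theorem one_add_ofSR_mul_self (i : ZMod p) : (1 + ofSR i) * (1 + ofSR i) = 0 := by
  simp only [add_mul, mul_add, one_mul, mul_one, ofSR_mul_ofSR, sub_self, ofR_zero]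
  rw [add_add_add_comm, add_comm (ofSR i), CharTwo.add_self_eq_zero]

theorem commute_ofR_add_ofR_neg (i k : ZMod p) : Commute (ofR k + ofR (-k)) (1 + ofSR i) := by
  simp only [Commute, SemiconjBy, mul_add, add_mul, mul_one, one_mul, ofR_mul_ofSR, ofSR_mul_ofR,
    sub_neg_eq_add, ← sub_eq_add_neg]
  abel

theorem bicyclic_sr_r_eq (i k : ZMod p) :
    1 + (of (ZMod 2) (DihedralGroup p) (sr i) - 1) * of _ _ (r k) *
        ∑ j ∈ range (orderOf (sr i)), of (ZMod 2) (DihedralGroup p) (sr i ^ j)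
      = 1 + (ofR k + ofR (-k)) * (1 + ofSR i) := by
  rw [orderOf_sr, sum_range_succ, sum_range_one, pow_zero, pow_one, map_one, CharTwo.sub_eq_add]
  simp only [mul_add, add_mul, mul_one, one_mul, ofR_mul_ofSR, ofSR_mul_ofR, ofSR_mul_ofSR,
    sub_neg_eq_add, sub_add_cancel_left]
  abel

theorem mapDomainRingHom_eq_one_of_mem_bicyclicGroup {H : Type*} [CommMonoid H]
    (f : DihedralGroup p →* H) {u : (MonoidAlgebra (ZMod 2) (DihedralGroup p))ˣ}
    (hu : u ∈ bicyclicGroup p) : mapDomainRingHom (ZMod 2) f u = 1 := by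
  have hker : bicyclicGroup p ≤ (Units.map (mapDomainRingHom (ZMod 2) f).toMonoidHom).ker :=
    (Subgroup.closure_le _).2 fun v ⟨g, h, hv⟩ => by
      rw [SetLike.mem_coe, MonoidHom.mem_ker, Units.ext_iff, Units.coe_map, hv]
      exact mapDomainRingHom_bicyclic_eq_one f g h
  simpa [Units.ext_iff] using hker hu

theorem exists_mem_bicyclicGroup_val_eq_one_add_mul (i k : ZMod p) :
    ∃ U ∈ bicyclicGroup p, (U : MonoidAlgebra (ZMod 2) (DihedralGroup p)) =
      1 + (ofR k + ofR (-k)) * (1 + ofSR i) := by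
  have hsq :
      (1 + (ofR k + ofR (-k)) * (1 + ofSR i)) * (1 + (ofR k + ofR (-k)) * (1 + ofSR i)) = 1 := by
    rw [one_add_mul_mul_one_add_mul (one_add_ofSR_mul_self i) _ (commute_ofR_add_ofR_neg i k),
      CharTwo.add_self_eq_zero, zero_mul, add_zero]
  exact ⟨⟨_, _, hsq, hsq⟩, Subgroup.subset_closure ⟨sr i, r k, (bicyclic_sr_r_eq i k).symm⟩, rfl⟩

theorem ofR_one_sub_one_mul_one_add_sum (m : ℕ) :
    (ofR 1 - 1) *
        (1 + ∑ j ∈ range m, (ofR ((j + 1 : ℕ) : ZMod p) + ofR (-((j + 1 : ℕ) : ZMod p)))) =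
      ofR ((m + 1 : ℕ) : ZMod p) - ofR (-(m : ZMod p)) := by
  induction m with
  | zero =>
    rw [range_zero, sum_empty, add_zero, mul_one, zero_add, Nat.cast_one, Nat.cast_zero, neg_zero,
      ofR_zero]
  | succ m ih =>
    rw [sum_range_succ, ← add_assoc, mul_add, ih]
    simp only [mul_add, sub_mul, one_mul, ofR_mul_ofR]
    push_cast
    rw [show (1 : ZMod p) + -(m + 1) = -m by ring, show (1 : ZMod p) + (m + 1) = m + 1 + 1 by ring]
    abel

theorem exists_mem_bicyclicGroup_val_eq_ofR_one (hodd : Odd p) :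
    ∃ U ∈ bicyclicGroup p, (U : MonoidAlgebra (ZMod 2) (DihedralGroup p)) = ofR 1 := by
  obtain ⟨l, hl⟩ := hodd
  set C : MonoidAlgebra (ZMod 2) (DihedralGroup p) :=
    ∑ j ∈ range l, (ofR ((j + 1 : ℕ) : ZMod p) + ofR (-((j + 1 : ℕ) : ZMod p)))
  have hC (i : ZMod p) : ∃ U ∈ bicyclicGroup p, (U : MonoidAlgebra (ZMod 2) (DihedralGroup p)) =
      1 + C * (1 + ofSR i) :=
    exists_mem_val_eq_one_add_sum_mul _ (one_add_ofSR_mul_self i) _ _ fun _ _ =>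
      ⟨commute_ofR_add_ofR_neg i _, exists_mem_bicyclicGroup_val_eq_one_add_mul i _⟩
  have hfix : (ofR 1 - 1) * (1 + C) = 0 := by
    have hneg : ((l + 1 : ℕ) : ZMod p) = -l := by
      rw [eq_neg_iff_add_eq_zero, ← Nat.cast_add, show l + 1 + l = p by omega, ZMod.natCast_self]
    rw [ofR_one_sub_one_mul_one_add_sum, hneg, sub_self]
  have hcomm : Commute (ofR 1) C :=
    Commute.sum_right _ _ _ fun _ _ => (commute_ofR _ _).add_right (commute_ofR _ _)
  obtain ⟨U, hU, hUv⟩ := hC (-1)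
  obtain ⟨V, hV, hVv⟩ := hC 0
  have hUV : (U : MonoidAlgebra (ZMod 2) (DihedralGroup p)) =
      ofR 1 * (V : MonoidAlgebra (ZMod 2) (DihedralGroup p)) := by
    rw [← sub_eq_zero]
    calc (U : MonoidAlgebra (ZMod 2) (DihedralGroup p)) -
          ofR 1 * (V : MonoidAlgebra (ZMod 2) (DihedralGroup p))
        = -((ofR 1 - 1) * (1 + C)) := by
          simp only [hUv, hVv, mul_add, sub_mul, mul_one, one_mul, ← mul_assoc, hcomm.eq]
          rw [mul_assoc C, ofR_mul_ofSR, zero_sub]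
          abel
      _ = 0 := by rw [hfix, neg_zero]
  exact ⟨U * V⁻¹, mul_mem hU (inv_mem hV),
    by rw [Units.val_mul, hUV, mul_assoc, Units.mul_inv, mul_one]⟩

end DihedralGroup

theorem stmt15_general (p : ℕ) (hodd : Odd p)
    (g : DihedralGroup p) (u : (MonoidAlgebra (ZMod 2) (DihedralGroup p))ˣ)
    (hu : (u : MonoidAlgebra (ZMod 2) (DihedralGroup p)) =
      MonoidAlgebra.of (ZMod 2) (DihedralGroup p) g) :
    u ∈ bicyclicGroup p ↔ g ∈ Subgroup.zpowers (DihedralGroup.r 1 : DihedralGroup p) := by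
  set ι := (of (ZMod 2) (DihedralGroup p)).toHomUnits
  obtain rfl : u = ι g := Units.ext hu
  constructor
  · intro hB
    rw [← parity_eq_one_iff]
    apply of_injective (R := ZMod 2)
    rw [map_one, ← mapDomainRingHom_of, ← hu,
      mapDomainRingHom_eq_one_of_mem_bicyclicGroup parity hB]
  · intro hg
    obtain ⟨U, hU, hUv⟩ := exists_mem_bicyclicGroup_val_eq_ofR_one hodd
    have hr : ι (r 1) = U := Units.ext hUv.symm
    have hle : Subgroup.zpowers (r 1) ≤ (bicyclicGroup p).comap ι :=
      Subgroup.zpowers_le.2 (Subgroup.mem_comap.2 (hr ▸ hU))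
    exact hle hg

theorem stmt15 (p : ℕ) (hp : p.Prime) (hodd : Odd p)
    (g : DihedralGroup p) (u : (MonoidAlgebra (ZMod 2) (DihedralGroup p))ˣ)
    (hu : (u : MonoidAlgebra (ZMod 2) (DihedralGroup p)) =
      MonoidAlgebra.of (ZMod 2) (DihedralGroup p) g) :
    u ∈ bicyclicGroup p ↔ g ∈ Subgroup.zpowers (DihedralGroup.r 1 : DihedralGroup p) :=
  stmt15_general p hodd g u hu
end

section
/- Let p be an odd prime and f: D_{2p} → C_2 = ⟨g | g^2 = 1⟩ the homomorphism with f(a^i) = 1 and f(a^i b) = g, extended to an algebra homomorphism f': F_2 D_{2p} → F_2 C_2. Then f' maps every bicyclic unit u_{g,h} of F_2 D_{2p} to 1; consequently b does not lie in the group generated by bicyclic units. -/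
open MonoidAlgebra

/-! A ring homomorphism `φ` into a commutative ring kills `(x - 1) * y * x̂` whenever `x ^ n = 1`:
commuting `φ y` out leaves `(φ x - 1) * (1 + φ x + ⋯ + φ x ^ (n - 1)) = φ (x ^ n) - 1 = 0`.
So every bicyclic unit, and hence every element of the group they generate, is mapped to `1`,
whereas `F'` maps the reflection `b` to the generator of `C₂`. -/

theorem map_one_add_sub_one_mul_mul_geom_sum {R A F : Type*} [Ring R] [CommRing A] [FunLike F R A]
    [RingHomClass F R A] (φ : F) {x : R} {n : ℕ} (hx : x ^ n = 1) (y : R) :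
    φ (1 + (x - 1) * y * ∑ i ∈ Finset.range n, x ^ i) = 1 := by
  have hzero : φ ((x - 1) * y * ∑ i ∈ Finset.range n, x ^ i) = 0 :=
    calc _ = φ y * ((φ x - 1) * ∑ i ∈ Finset.range n, φ x ^ i) := by
          simp only [map_mul, map_sub, map_one, map_sum, map_pow]; ring
      _ = 0 := by rw [mul_geom_sum, ← map_pow, hx, map_one, sub_self, mul_zero]
  rw [map_add, map_one, hzero, add_zero]

theorem MonoidAlgebra.map_bicyclic {k G A F : Type*} [Ring k] [Monoid G] [CommRing A]
    [FunLike F (MonoidAlgebra k G) A] [RingHomClass F (MonoidAlgebra k G) A] (φ : F) (g h : G) :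
    φ (1 + (of k G g - 1) * of k G h * ∑ i ∈ Finset.range (orderOf g), of k G (g ^ i)) = 1 := by
  simp only [map_pow]
  exact map_one_add_sub_one_mul_mul_geom_sum φ (by rw [← map_pow, pow_orderOf_eq_one, map_one]) _

theorem bicyclicGroup_le_ker {A F : Type*} [CommRing A] {p : ℕ}
    [FunLike F (MonoidAlgebra (ZMod 2) (DihedralGroup p)) A]
    [RingHomClass F (MonoidAlgebra (ZMod 2) (DihedralGroup p)) A] (φ : F) :
    bicyclicGroup p ≤ (Units.map (φ : MonoidAlgebra (ZMod 2) (DihedralGroup p) →* A)).ker := by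
  rw [bicyclicGroup, Subgroup.closure_le]
  rintro u ⟨g, h, hu⟩
  rw [SetLike.mem_coe, MonoidHom.mem_ker, Units.ext_iff, Units.coe_map, Units.val_one,
    MonoidHom.coe_coe, hu]
  exact map_bicyclic φ g h

theorem stmt16_general (p : ℕ)
    (F' : MonoidAlgebra (ZMod 2) (DihedralGroup p) →ₐ[ZMod 2]
      MonoidAlgebra (ZMod 2) (Multiplicative (ZMod 2)))
    (hFs : ∀ i, F' (MonoidAlgebra.of (ZMod 2) (DihedralGroup p) (DihedralGroup.sr i)) =
      MonoidAlgebra.of (ZMod 2) (Multiplicative (ZMod 2)) (Multiplicative.ofAdd 1)) :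
    (∀ g h : DihedralGroup p,
      F' (1 + (MonoidAlgebra.of (ZMod 2) (DihedralGroup p) g - 1) *
        MonoidAlgebra.of (ZMod 2) (DihedralGroup p) h *
        ∑ i ∈ Finset.range (orderOf g),
          MonoidAlgebra.of (ZMod 2) (DihedralGroup p) (g ^ i)) = 1) ∧
    ∀ u : (MonoidAlgebra (ZMod 2) (DihedralGroup p))ˣ,
      (u : MonoidAlgebra (ZMod 2) (DihedralGroup p)) =
        MonoidAlgebra.of (ZMod 2) (DihedralGroup p) (DihedralGroup.sr 0) →
      u ∉ bicyclicGroup p := by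
  refine ⟨map_bicyclic F', fun u hu hmem => ?_⟩
  have hFu : F' u = 1 := congrArg Units.val (bicyclicGroup_le_ker F' hmem)
  rw [hu, hFs 0, ← map_one (of (ZMod 2) (Multiplicative (ZMod 2)))] at hFu
  exact absurd (of_injective hFu) (by decide)

theorem stmt16 (p : ℕ) (hp : p.Prime) (hodd : Odd p)
    (F' : MonoidAlgebra (ZMod 2) (DihedralGroup p) →ₐ[ZMod 2]
      MonoidAlgebra (ZMod 2) (Multiplicative (ZMod 2)))
    (hFr : ∀ i, F' (MonoidAlgebra.of (ZMod 2) (DihedralGroup p) (DihedralGroup.r i)) = 1)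
    (hFs : ∀ i, F' (MonoidAlgebra.of (ZMod 2) (DihedralGroup p) (DihedralGroup.sr i)) =
      MonoidAlgebra.of (ZMod 2) (Multiplicative (ZMod 2)) (Multiplicative.ofAdd 1)) :
    (∀ g h : DihedralGroup p,
      F' (1 + (MonoidAlgebra.of (ZMod 2) (DihedralGroup p) g - 1) *
        MonoidAlgebra.of (ZMod 2) (DihedralGroup p) h *
        ∑ i ∈ Finset.range (orderOf g),
          MonoidAlgebra.of (ZMod 2) (DihedralGroup p) (g ^ i)) = 1) ∧
    ∀ u : (MonoidAlgebra (ZMod 2) (DihedralGroup p))ˣ,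
      (u : MonoidAlgebra (ZMod 2) (DihedralGroup p)) =
        MonoidAlgebra.of (ZMod 2) (DihedralGroup p) (DihedralGroup.sr 0) →
      u ∉ bicyclicGroup p :=
  stmt16_general p F' hFs
end

section
/- Let p be an odd prime with order of 2 mod p equal to d, and let γ_1, …, γ_k be primitive p-th roots of unity over F_2 whose minimal polynomials are pairwise coprime and (when d is odd) pairwise non-inverse. Then the minimal polynomials over F_2 of γ_1 + γ_1^{-1}, …, γ_k + γ_k^{-1} are pairwise distinct. -/
open Polynomial

private lemma aeval_sq (g : (ZMod 2)[X]) (y : AlgebraicClosure (ZMod 2)) :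
    aeval (y ^ 2) g = (aeval y g) ^ 2 := by
  have hcomp : (frobenius (AlgebraicClosure (ZMod 2)) 2).comp
      (algebraMap (ZMod 2) (AlgebraicClosure (ZMod 2))) =
      algebraMap (ZMod 2) (AlgebraicClosure (ZMod 2)) :=
    RingHom.ext fun c => by
      simp only [RingHom.comp_apply, frobenius_def, ← map_pow, ZMod.pow_card]
  have h := Polynomial.hom_eval₂ g (algebraMap (ZMod 2) (AlgebraicClosure (ZMod 2)))
    (frobenius (AlgebraicClosure (ZMod 2)) 2) y
  simp only [frobenius_def, hcomp] at h
  simpa [aeval_def] using h.symm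

private lemma aeval_pow2 (g : (ZMod 2)[X]) (y : AlgebraicClosure (ZMod 2)) (m : ℕ) :
    aeval (y ^ 2 ^ m) g = (aeval y g) ^ 2 ^ m := by
  induction m with
  | zero => simp
  | succ m ih =>
    have : y ^ 2 ^ (m + 1) = (y ^ 2 ^ m) ^ 2 := by rw [← pow_mul, pow_succ]
    rw [this, aeval_sq, ih, ← pow_mul, ← pow_succ]

/-- If `d = orderOf (2 : ZMod p)` is even, then `γ⁻¹` has the same minimal
polynomial as `γ` for a primitive `p`-th root `γ`. -/
private lemma minpoly_inv_eq (p : ℕ) (hp : p.Prime) (hodd : Odd p)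
    (d : ℕ) (hd : d = orderOf (2 : ZMod p)) (heven : Even d)
    (γ : AlgebraicClosure (ZMod 2)) (hγ : IsPrimitiveRoot γ p) :
    minpoly (ZMod 2) γ⁻¹ = minpoly (ZMod 2) γ := by
  haveI : Fact p.Prime := ⟨hp⟩
  have hp2 : (2 : ZMod p) ≠ 0 := by
    have : ((2 : ℕ) : ZMod p) ≠ 0 := by
      rw [Ne, ZMod.natCast_eq_zero_iff]
      intro hdvd
      have hp2 := (Nat.prime_dvd_prime_iff_eq hp Nat.prime_two).mp hdvd
      rw [hp2, Nat.odd_iff] at hodd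
      omega
    simpa using this
  have hdpos : 0 < d := by
    rw [hd, orderOf_pos_iff]
    exact isOfFinOrder_iff_pow_eq_one.mpr
      ⟨p - 1, Nat.sub_pos_of_lt hp.one_lt, ZMod.pow_card_sub_one_eq_one hp2⟩
  -- 2 ^ (d/2) = -1 in ZMod p
  have hhalf : (2 : ZMod p) ^ (d / 2) = -1 := by
    have hsq : ((2 : ZMod p) ^ (d / 2)) ^ 2 = 1 := by
      rw [← pow_mul, Nat.div_mul_cancel heven.two_dvd, hd, pow_orderOf_eq_one]
    have hne1 : (2 : ZMod p) ^ (d / 2) ≠ 1 := by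
      intro h1
      have hdvd : orderOf (2 : ZMod p) ∣ d / 2 := orderOf_dvd_of_pow_eq_one h1
      rw [← hd] at hdvd
      obtain ⟨r, hr⟩ := heven
      have h2 : 1 ≤ d / 2 := by omega
      have := Nat.le_of_dvd h2 hdvd
      omega
    have : ((2 : ZMod p) ^ (d / 2) - 1) * ((2 : ZMod p) ^ (d / 2) + 1) = 0 := by
      ring_nf
      linear_combination hsq
    rcases mul_eq_zero.mp this with h | h
    · exact absurd (by linear_combination h) hne1
    · linear_combination h
  -- γ ^ (2 ^ (d/2)) = γ⁻¹
  have hγ0 : γ ≠ 0 := fun h => by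
    have := hγ.pow_eq_one
    rw [h, zero_pow hp.ne_zero] at this
    exact zero_ne_one this
  have hmod : (2 ^ (d / 2) : ℕ) % p = (p - 1) % p := by
    have : ((2 ^ (d / 2) : ℕ) : ZMod p) = ((p - 1 : ℕ) : ZMod p) := by
      push_cast
      rw [hhalf]
      have h1 : ((p - 1 : ℕ) : ZMod p) = (p : ZMod p) - 1 := by
        push_cast [Nat.cast_sub (le_of_lt hp.one_lt)]
        ring
      rw [h1, ZMod.natCast_self]
      ring
    exact (ZMod.natCast_eq_natCast_iff _ _ _).mp this
  have hpow : γ ^ (2 ^ (d / 2)) = γ⁻¹ := by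
    have h1 : γ ^ (2 ^ (d / 2)) = γ ^ (p - 1) := by
      calc γ ^ 2 ^ (d / 2) = γ ^ (2 ^ (d / 2) % orderOf γ) :=
            (pow_mod_orderOf _ _).symm
        _ = γ ^ (2 ^ (d / 2) % p) := by rw [← hγ.eq_orderOf]
        _ = γ ^ ((p - 1) % p) := by rw [hmod]
        _ = γ ^ ((p - 1) % orderOf γ) := by rw [← hγ.eq_orderOf]
        _ = γ ^ (p - 1) := pow_mod_orderOf _ _
    rw [h1]
    have h2 : γ * γ ^ (p - 1) = 1 := by
      rw [← pow_succ', Nat.sub_add_cancel hp.one_le]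
      exact hγ.pow_eq_one
    exact eq_inv_of_mul_eq_one_right h2
  have hroot : aeval γ⁻¹ (minpoly (ZMod 2) γ) = 0 := by
    rw [← hpow, aeval_pow2, minpoly.aeval, zero_pow (pow_ne_zero _ two_ne_zero)]
  have hint : IsIntegral (ZMod 2) γ := Algebra.IsIntegral.isIntegral γ
  exact (minpoly.eq_of_irreducible_of_monic (minpoly.irreducible hint) hroot
    (minpoly.monic hint)).symm

private lemma sum_inv_eq {a b : AlgebraicClosure (ZMod 2)} (ha : a ≠ 0) (hb : b ≠ 0)
    (h : a + a⁻¹ = b + b⁻¹) : a = b ∨ a = b⁻¹ := by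
  have h1 : (a - b) * (a * b - 1) = 0 := by
    have h2 : (a + a⁻¹) * (a * b) = (b + b⁻¹) * (a * b) := by rw [h]
    have ha' : a⁻¹ * a = 1 := inv_mul_cancel₀ ha
    have hb' : b⁻¹ * b = 1 := inv_mul_cancel₀ hb
    linear_combination h2 - b * ha' + a * hb'
  rcases mul_eq_zero.mp h1 with h | h
  · left; linear_combination h
  · right
    rw [sub_eq_zero] at h
    exact eq_inv_of_mul_eq_one_left (by linear_combination h)

theorem stmt17 (p : ℕ) (hp : p.Prime) (hodd : Odd p)
    (d : ℕ) (hd : d = orderOf (2 : ZMod p))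
    (k : ℕ) (γ : Fin k → AlgebraicClosure (ZMod 2))
    (hγ : ∀ i, IsPrimitiveRoot (γ i) p)
    (hdist : ∀ i j, i ≠ j → minpoly (ZMod 2) (γ i) ≠ minpoly (ZMod 2) (γ j))
    (hninv : Odd d → ∀ i j, i ≠ j →
      minpoly (ZMod 2) (γ i) ≠ minpoly (ZMod 2) (γ j)⁻¹) :
    ∀ i j, i ≠ j →
      minpoly (ZMod 2) (γ i + (γ i)⁻¹) ≠ minpoly (ZMod 2) (γ j + (γ j)⁻¹) := by
  intro i j hij h
  have hγ0 : ∀ l, γ l ≠ 0 := fun l h0 => by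
    have := (hγ l).pow_eq_one
    rw [h0, zero_pow hp.ne_zero] at this
    exact zero_ne_one this
  obtain ⟨σ, hσ⟩ := IsConjRoot.exists_algEquiv (K := ZMod 2)
    (L := AlgebraicClosure (ZMod 2)) (isConjRoot_def.mpr h)
  -- hσ : σ (γ j + (γ j)⁻¹) = γ i + (γ i)⁻¹
  have hσ' : σ (γ j) + (σ (γ j))⁻¹ = γ i + (γ i)⁻¹ := by
    rw [← map_inv₀, ← map_add]; exact hσ
  have hδ0 : σ (γ j) ≠ 0 := by
    simp [_root_.map_ne_zero, hγ0 j]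
  rcases sum_inv_eq (hγ0 i) hδ0 hσ'.symm with hcase | hcase
  · -- γ i = σ (γ j)
    refine hdist i j hij ?_
    rw [hcase, minpoly.algEquiv_eq]
  · -- γ i = (σ (γ j))⁻¹ = σ ((γ j)⁻¹)
    have hcase' : γ i = σ ((γ j)⁻¹) := by rw [map_inv₀]; exact hcase
    rcases Nat.even_or_odd d with heven | hoddd
    · refine hdist i j hij ?_
      rw [hcase', minpoly.algEquiv_eq, minpoly_inv_eq p hp hodd d hd heven (γ j) (hγ j)]
    · refine hninv hoddd i j hij ?_
      rw [hcase', minpoly.algEquiv_eq]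
end
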